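/- arXiv:2102.13347 — 10 statements merged into one kernel-verified Lean document; each statement's English description precedes it below -/
import Mathlib

section
/- Let X be a random vector in [0,1]^p with density bounded above and below by strictly positive constants, and let m be continuous. Let X_{π_j} denote X with its j-th component replaced by an independent copy of X^{(j)}. Then the marginal total Sobol index ST_mg^{(j)} = E[Var(m(X_{π_j}) | X^{(-j)})]/Var(Y) is zero if and only if the total Sobol index ST^{(j)} = E[Var(m(X) | X^{(-j)})]/Var(Y) is zero. -/
/-!
Since the density of `X` is bounded below on the cube, the law of `X` has the same null sets as
Lebesgue measure on the cube, which is a product measure. A law with the same null sets as a product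
measure has the same null sets as the product of its marginals, and the law of `X_{π_j}` is the
product of the laws of `X^{(j)}` and `X^{(-j)}`; so `X` and `X_{π_j}` have equivalent laws.
Either index vanishes iff `m(V)` is a.s. `σ(X^{(-j)})`-measurable (`V = X` or `X_{π_j}`), i.e. iff
`m = h ∘ x^{(-j)}` almost everywhere for the law of `V`, which only depends on its null sets.
-/

open MeasureTheory ProbabilityTheory
open scoped ENNReal NNReal

noncomputable section

/-- The σ-algebra generated by the components of `X` other than the `j`-th,
    i.e. the σ-algebra of `X^{(-j)}`. -/
def sigmaWithout {Ω : Type*} [MeasurableSpace Ω] {p : ℕ} (X : Ω → Fin p → ℝ) (j : Fin p) :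
    MeasurableSpace Ω :=
  MeasurableSpace.comap (fun ω => fun k : {k : Fin p // k ≠ j} => X ω (k : Fin p)) inferInstance

/-- `X_{π_j}` : the vector `X` with its `j`-th component replaced by `X'`. -/
def permuted {Ω : Type*} {p : ℕ} (X : Ω → Fin p → ℝ) (j : Fin p) (X' : Ω → ℝ) :
    Ω → Fin p → ℝ :=
  fun ω => Function.update (X ω) j (X' ω)

namespace MeasureTheory.Measure

variable {α β : Type*} [MeasurableSpace α] [MeasurableSpace β]
  {μ : Measure (α × β)} {ρ₁ : Measure α} {ρ₂ : Measure β}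

lemma map_fst_absolutelyContinuous [SFinite ρ₂] (h : μ ≪ ρ₁.prod ρ₂) : μ.map Prod.fst ≪ ρ₁ :=
  (h.map measurable_fst).trans (by rw [map_fst_prod]; exact smul_absolutelyContinuous)

lemma map_snd_absolutelyContinuous [SFinite ρ₂] (h : μ ≪ ρ₁.prod ρ₂) : μ.map Prod.snd ≪ ρ₂ :=
  (h.map measurable_snd).trans (by rw [map_snd_prod]; exact smul_absolutelyContinuous)

lemma absolutelyContinuous_map_fst [SFinite ρ₂] [NeZero ρ₂] (h : ρ₁.prod ρ₂ ≪ μ) :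
    ρ₁ ≪ μ.map Prod.fst :=
  (absolutelyContinuous_smul (NeZero.ne (ρ₂ Set.univ))).trans
    (map_fst_prod (μ := ρ₁) (ν := ρ₂) ▸ h.map measurable_fst)

lemma absolutelyContinuous_map_snd [SFinite ρ₂] [NeZero ρ₁] (h : ρ₁.prod ρ₂ ≪ μ) :
    ρ₂ ≪ μ.map Prod.snd :=
  (absolutelyContinuous_smul (NeZero.ne (ρ₁ Set.univ))).trans
    (map_snd_prod (μ := ρ₁) (ν := ρ₂) ▸ h.map measurable_snd)

lemma prod_map_fst_map_snd_absolutelyContinuous [SFinite ρ₂] [IsFiniteMeasure μ]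
    (h₁ : μ ≪ ρ₁.prod ρ₂) (h₂ : ρ₁.prod ρ₂ ≪ μ) :
    (μ.map Prod.fst).prod (μ.map Prod.snd) ≪ μ :=
  ((map_fst_absolutelyContinuous h₁).prod (map_snd_absolutelyContinuous h₁)).trans h₂

lemma absolutelyContinuous_prod_map_fst_map_snd [SFinite ρ₂] [NeZero ρ₁] [NeZero ρ₂]
    [IsFiniteMeasure μ] (h₁ : μ ≪ ρ₁.prod ρ₂) (h₂ : ρ₁.prod ρ₂ ≪ μ) :
    μ ≪ (μ.map Prod.fst).prod (μ.map Prod.snd) :=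
  h₁.trans ((absolutelyContinuous_map_fst h₂).prod (absolutelyContinuous_map_snd h₂))

instance pi.neZero {ι : Type*} [Fintype ι] {α : ι → Type*} [∀ i, MeasurableSpace (α i)]
    (ρ : ∀ i, Measure (α i)) [∀ i, SigmaFinite (ρ i)] [∀ i, NeZero (ρ i)] :
    NeZero (Measure.pi ρ) :=
  ⟨measure_univ_ne_zero.1 <| by
    rw [pi_univ]
    exact Finset.prod_ne_zero_iff.2 fun i _ => NeZero.ne _⟩

section Resample

variable {ι α : Type*} [DecidableEq ι] [MeasurableSpace α]

/-- The law of `X_{π_j}` when `X ∼ μ`. -/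
def resample (μ : Measure (ι → α)) (j : ι) : Measure (ι → α) :=
  ((μ.map (Function.eval j)).prod μ).map fun q => Function.update q.2 j q.1

lemma map_piEquivPiSubtypeProd_resample (μ : Measure (ι → α)) [IsFiniteMeasure μ] (j : ι) :
    (μ.resample j).map (MeasurableEquiv.piEquivPiSubtypeProd (fun _ => α) (· = j)) =
      ((μ.map (MeasurableEquiv.piEquivPiSubtypeProd (fun _ => α) (· = j))).map Prod.fst).prod
        ((μ.map (MeasurableEquiv.piEquivPiSubtypeProd (fun _ => α) (· = j))).map Prod.snd) := by
  set e := MeasurableEquiv.piEquivPiSubtypeProd (fun _ : ι => α) (· = j)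
  have hconst : Measurable fun (a : α) (_ : {k // k = j}) => a :=
    measurable_pi_lambda _ fun _ => measurable_id
  have hupd : Measurable fun q : α × (ι → α) => Function.update q.2 j q.1 :=
    measurable_update'.comp measurable_swap
  have hupdate : (e ∘ fun q : α × (ι → α) => Function.update q.2 j q.1) =
      Prod.map (fun a _ => a) (Prod.snd ∘ e) := by
    ext q k
    · obtain ⟨k, rfl⟩ := k; simp [e]
    · obtain ⟨k, hk⟩ := k; simp [e, Function.update_of_ne hk]
  have hfst : ((fun (a : α) (_ : {k // k = j}) => a) ∘ Function.eval j) = Prod.fst ∘ e := by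
    ext x ⟨k, rfl⟩; rfl
  rw [resample, map_map e.measurable hupd, hupdate,
    ← map_prod_map _ _ hconst (measurable_snd.comp e.measurable),
    map_map hconst (measurable_pi_apply j), hfst,
    map_map measurable_fst e.measurable, map_map measurable_snd e.measurable]

variable [Fintype ι] {ρ : ι → Measure α} [∀ i, SigmaFinite (ρ i)]
  {μ : Measure (ι → α)} [IsFiniteMeasure μ]

lemma resample_absolutelyContinuous (h₁ : μ ≪ Measure.pi ρ) (h₂ : Measure.pi ρ ≪ μ) (j : ι) :
    μ.resample j ≪ μ := by
  set e := MeasurableEquiv.piEquivPiSubtypeProd (fun _ : ι => α) (· = j)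
  have hsplit := (measurePreserving_piEquivPiSubtypeProd ρ (· = j)).map_eq
  have h₁' := hsplit ▸ h₁.map e.measurable
  have h₂' := hsplit ▸ h₂.map e.measurable
  calc μ.resample j = ((μ.resample j).map e).map e.symm := e.map_symm_map.symm
    _ ≪ (μ.map e).map e.symm := by
      rw [map_piEquivPiSubtypeProd_resample]
      exact (prod_map_fst_map_snd_absolutelyContinuous h₁' h₂').map e.symm.measurable
    _ = μ := e.map_symm_map

lemma absolutelyContinuous_resample [∀ i, NeZero (ρ i)] (h₁ : μ ≪ Measure.pi ρ)
    (h₂ : Measure.pi ρ ≪ μ) (j : ι) : μ ≪ μ.resample j := by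
  set e := MeasurableEquiv.piEquivPiSubtypeProd (fun _ : ι => α) (· = j)
  have hsplit := (measurePreserving_piEquivPiSubtypeProd ρ (· = j)).map_eq
  have h₁' := hsplit ▸ h₁.map e.measurable
  have h₂' := hsplit ▸ h₂.map e.measurable
  calc μ = (μ.map e).map e.symm := e.map_symm_map.symm
    _ ≪ ((μ.resample j).map e).map e.symm := by
      rw [map_piEquivPiSubtypeProd_resample]
      exact (absolutelyContinuous_prod_map_fst_map_snd h₁' h₂').map e.symm.measurable
    _ = μ.resample j := e.map_symm_map

end Resample

end MeasureTheory.Measure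

section CondExp

variable {Ω : Type*}

lemma integral_sq_sub_condExp_eq_zero_iff {m m₀ : MeasurableSpace Ω} {μ : Measure[m₀] Ω}
    [IsFiniteMeasure μ] (hm : m ≤ m₀) {f : Ω → ℝ} (hf : MemLp f 2 μ) :
    ∫ ω, (f ω - μ[f|m] ω) ^ 2 ∂μ = 0 ↔ AEStronglyMeasurable[m] f μ := by
  have hint : Integrable (fun ω => (f ω - μ[f|m] ω) ^ 2) μ :=
    (hf.sub (hf.condExp one_le_two)).integrable_sq
  rw [integral_eq_zero_iff_of_nonneg (fun _ => sq_nonneg _) hint]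
  constructor
  · intro h
    refine ⟨μ[f|m], stronglyMeasurable_condExp, h.mono fun ω hω => ?_⟩
    simpa [sub_eq_zero] using hω
  · intro h
    filter_upwards [condExp_of_aestronglyMeasurable' hm h (hf.integrable one_le_two)] with ω hω
    simp [hω]

lemma aestronglyMeasurable_comap_iff [MeasurableSpace Ω] {μ : Measure Ω} {β Z : Type*}
    [MeasurableSpace β] [TopologicalSpace Z] [TopologicalSpace.IsCompletelyMetrizableSpace Z]
    [Nonempty Z] {g : Ω → β} {f : Ω → Z} :
    AEStronglyMeasurable[MeasurableSpace.comap g ‹_›] f μ ↔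
      ∃ h : β → Z, StronglyMeasurable h ∧ f =ᵐ[μ] h ∘ g := by
  constructor
  · rintro ⟨f', hf', hff'⟩
    obtain ⟨h, hh, rfl⟩ := hf'.exists_eq_measurable_comp
    exact ⟨h, hh, hff'⟩
  · rintro ⟨h, hh, hfh⟩
    exact ⟨h ∘ g, hh.comp_measurable (comap_measurable g), hfh⟩

lemma integral_sq_sub_condExp_comap_eq_zero_iff [MeasurableSpace Ω] {μ : Measure Ω}
    [IsFiniteMeasure μ] {β γ : Type*} [MeasurableSpace β] [MeasurableSpace γ] {V : Ω → β}
    (hV : Measurable V) {g : β → γ} (hg : Measurable g) {f : β → ℝ} (hf : Measurable f)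
    (hf₂ : MemLp f 2 (μ.map V)) :
    ∫ ω, (f (V ω) - μ[fun ω => f (V ω)|MeasurableSpace.comap (g ∘ V) ‹_›] ω) ^ 2 ∂μ = 0 ↔
      ∃ h : γ → ℝ, StronglyMeasurable h ∧ f =ᵐ[μ.map V] h ∘ g := by
  rw [integral_sq_sub_condExp_eq_zero_iff (f := fun ω => f (V ω)) (hg.comp hV).comap_le
      ((memLp_map_measure_iff hf.aestronglyMeasurable hV.aemeasurable).1 hf₂),
    aestronglyMeasurable_comap_iff]
  refine exists_congr fun h => and_congr_right fun hh => ?_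
  exact (ae_map_iff hV.aemeasurable (measurableSet_eq_fun hf (hh.measurable.comp hg))).symm

end CondExp

lemma Continuous.memLp_of_ae_mem_isCompact {α E : Type*} [TopologicalSpace α] [MeasurableSpace α]
    [OpensMeasurableSpace α] [NormedAddCommGroup E] [SecondCountableTopologyEither α E]
    {μ : Measure α} [IsFiniteMeasure μ] {f : α → E} (hf : Continuous f) {K : Set α}
    (hK : IsCompact K) (h : ∀ᵐ x ∂μ, x ∈ K) {q : ℝ≥0∞} : MemLp f q μ := by
  obtain ⟨C, hC⟩ := hK.exists_bound_of_continuousOn hf.continuousOn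
  exact .of_bound hf.aestronglyMeasurable C (h.mono hC)

section Sobol

variable {Ω : Type*} [MeasurableSpace Ω] {p : ℕ}

lemma sigmaWithout_permuted (X : Ω → Fin p → ℝ) (j : Fin p) (X' : Ω → ℝ) :
    sigmaWithout (permuted X j X') j = sigmaWithout X j := by
  unfold sigmaWithout permuted
  congr with ω k
  exact Function.update_of_ne k.2 _ _

lemma measurable_permuted {X : Ω → Fin p → ℝ} {X' : Ω → ℝ} (j : Fin p) (hX : Measurable X)
    (hX' : Measurable X') : Measurable (permuted X j X') :=
  measurable_update'.comp (hX.prodMk hX')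

lemma map_permuted_eq_resample {P : Measure Ω} [IsFiniteMeasure P] {X : Ω → Fin p → ℝ}
    {X' : Ω → ℝ} (j : Fin p) (hX : Measurable X) (hX' : Measurable X')
    (hcopy : P.map X' = P.map (fun ω => X ω j)) (hindep : IndepFun X' X P) :
    P.map (permuted X j X') = (P.map X).resample j := by
  have hmarg : (P.map X).map (Function.eval j) = P.map X' := by
    rw [hcopy, Measure.map_map (measurable_pi_apply j) hX]
    rfl
  have hupd : Measurable fun q : ℝ × (Fin p → ℝ) => Function.update q.2 j q.1 :=
    measurable_update'.comp measurable_swap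
  rw [Measure.resample, hmarg,
    ← (indepFun_iff_map_prod_eq_prod_map_map hX'.aemeasurable hX.aemeasurable).1 hindep,
    Measure.map_map hupd (hX'.prodMk hX)]
  rfl

lemma integral_sq_sub_condExp_sigmaWithout_eq_zero_iff {P : Measure Ω} [IsFiniteMeasure P]
    {V : Ω → Fin p → ℝ} (hV : Measurable V) (j : Fin p) {f : (Fin p → ℝ) → ℝ}
    (hf : Measurable f) (hf₂ : MemLp f 2 (P.map V)) :
    ∫ ω, (f (V ω) - P[fun ω => f (V ω)|sigmaWithout V j] ω) ^ 2 ∂P = 0 ↔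
      ∃ h : ({k // k ≠ j} → ℝ) → ℝ, StronglyMeasurable h ∧
        f =ᵐ[P.map V] h ∘ Subtype.restrict (· ≠ j) :=
  integral_sq_sub_condExp_comap_eq_zero_iff hV
    (measurable_pi_lambda _ fun _ => measurable_pi_apply _) hf hf₂

end Sobol

theorem marginal_total_sobol_zero_iff_general
    {Ω : Type*} [MeasureSpace Ω] [IsProbabilityMeasure (ℙ : Measure Ω)]
    {p : ℕ} (j : Fin p) (X : Ω → Fin p → ℝ) (X' : Ω → ℝ) (ε : Ω → ℝ)
    (m : (Fin p → ℝ) → ℝ) (hm : Continuous m)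
    (hX : Measurable X) (hX' : Measurable X')
    (fX : (Fin p → ℝ) → ℝ≥0∞) (hfX : Measurable fX) (c1 c2 : ℝ≥0∞)
    (hc1 : 0 < c1)
    -- `X` has density `fX`, supported on the unit cube and bounded above and below there
    (hmap : Measure.map X ℙ = (volume.restrict (Set.Icc (0 : Fin p → ℝ) 1)).withDensity fX)
    (hbound : ∀ x ∈ Set.Icc (0 : Fin p → ℝ) 1, c1 ≤ fX x ∧ fX x ≤ c2)
    -- `X'` is an independent copy of the `j`-th component of `X`
    (hcopy : Measure.map X' ℙ = Measure.map (fun ω => X ω j) ℙ)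
    (hindep : IndepFun X' X ℙ)
    -- `Y = m(X) + ε` with `ε` centered and independent of `X`, and `Var(Y) > 0`
    (hVarY : 0 < variance (fun ω => m (X ω) + ε ω) ℙ) :
    (∫ ω, (m (permuted X j X' ω)
        - (ℙ[fun ω' => m (permuted X j X' ω') | sigmaWithout X j]) ω) ^ 2 ∂ℙ)
          / variance (fun ω => m (X ω) + ε ω) ℙ = 0 ↔
    (∫ ω, (m (X ω) - (ℙ[fun ω' => m (X ω') | sigmaWithout X j]) ω) ^ 2 ∂ℙ)
          / variance (fun ω => m (X ω) + ε ω) ℙ = 0 := by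
  set ρ : Fin p → Measure ℝ := fun _ => volume.restrict (Set.Icc 0 1)
  have : NeZero (volume.restrict (Set.Icc (0 : ℝ) 1)) := ⟨by simp⟩
  have hcube : volume.restrict (Set.Icc (0 : Fin p → ℝ) 1) = Measure.pi ρ := by
    rw [← Set.pi_univ_Icc, volume_pi, Measure.restrict_pi_pi]
    rfl
  have hlaw_ac : Measure.map X ℙ ≪ Measure.pi ρ :=
    hcube ▸ hmap ▸ withDensity_absolutelyContinuous _ _
  have hac_law : Measure.pi ρ ≪ Measure.map X ℙ := by
    rw [← hcube, hmap]
    refine withDensity_absolutelyContinuous' hfX.aemeasurable ?_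
    filter_upwards [ae_restrict_mem measurableSet_Icc] with x hx
    exact (hc1.trans_le (hbound x hx).1).ne'
  have hlaw_cube : ∀ᵐ x ∂Measure.map X ℙ, x ∈ Set.Icc 0 1 :=
    hlaw_ac.ae_le (hcube ▸ ae_restrict_mem measurableSet_Icc)
  have hperm := map_permuted_eq_resample j hX hX' hcopy hindep
  rw [div_eq_zero_iff, div_eq_zero_iff, or_iff_left hVarY.ne', or_iff_left hVarY.ne',
    integral_sq_sub_condExp_sigmaWithout_eq_zero_iff hX j hm.measurable
      (hm.memLp_of_ae_mem_isCompact isCompact_Icc hlaw_cube),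
    ← sigmaWithout_permuted X j X',
    integral_sq_sub_condExp_sigmaWithout_eq_zero_iff (measurable_permuted j hX hX') j
      hm.measurable (hm.memLp_of_ae_mem_isCompact isCompact_Icc
        (hperm ▸ (Measure.resample_absolutelyContinuous hlaw_ac hac_law j).ae_le hlaw_cube)), hperm]
  exact exists_congr fun h => and_congr_right fun _ =>
    ⟨(Measure.absolutelyContinuous_resample hlaw_ac hac_law j).ae_eq,
      (Measure.resample_absolutelyContinuous hlaw_ac hac_law j).ae_eq⟩

/-- The marginal total Sobol index `ST_mg^{(j)}` vanishes iff the total Sobol index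
`ST^{(j)}` vanishes. -/
theorem marginal_total_sobol_zero_iff
    {Ω : Type*} [MeasureSpace Ω] [IsProbabilityMeasure (ℙ : Measure Ω)]
    {p : ℕ} (j : Fin p) (X : Ω → Fin p → ℝ) (X' : Ω → ℝ) (ε : Ω → ℝ)
    (m : (Fin p → ℝ) → ℝ) (hm : Continuous m)
    (hX : Measurable X) (hX' : Measurable X') (hε : Measurable ε)
    (fX : (Fin p → ℝ) → ℝ≥0∞) (hfX : Measurable fX) (c1 c2 : ℝ≥0∞)
    (hc1 : 0 < c1) (hc2 : c2 < ⊤)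
    -- `X` has density `fX`, supported on the unit cube and bounded above and below there
    (hmap : Measure.map X ℙ = (volume.restrict (Set.Icc (0 : Fin p → ℝ) 1)).withDensity fX)
    (hbound : ∀ x ∈ Set.Icc (0 : Fin p → ℝ) 1, c1 ≤ fX x ∧ fX x ≤ c2)
    -- `X'` is an independent copy of the `j`-th component of `X`
    (hcopy : Measure.map X' ℙ = Measure.map (fun ω => X ω j) ℙ)
    (hindep : IndepFun X' X ℙ)
    -- `Y = m(X) + ε` with `ε` centered and independent of `X`, and `Var(Y) > 0`
    (hεindep : IndepFun ε X ℙ) (hεint : Integrable ε ℙ) (hεmean : ∫ ω, ε ω ∂ℙ = 0)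
    (hVarY : 0 < variance (fun ω => m (X ω) + ε ω) ℙ) :
    (∫ ω, (m (permuted X j X' ω)
        - (ℙ[fun ω' => m (permuted X j X' ω') | sigmaWithout X j]) ω) ^ 2 ∂ℙ)
          / variance (fun ω => m (X ω) + ε ω) ℙ = 0 ↔
    (∫ ω, (m (X ω) - (ℙ[fun ω' => m (X ω') | sigmaWithout X j]) ω) ^ 2 ∂ℙ)
          / variance (fun ω => m (X ω) + ε ω) ℙ = 0 :=
  marginal_total_sobol_zero_iff_general j X X' ε m hm hX hX' fX hfX c1 c2 hc1 hmap hbound hcopy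
    hindep hVarY
end
end

section
/- If the regression function is additive, m(X) = Σ_k m_k(X^{(k)}), then the unnormalized marginal total Sobol index equals the variance of the j-th component function: E[Var(m(X_{π_j}) | X^{(-j)})] = Var(m_j(X^{(j)})). -/
open MeasureTheory ProbabilityTheory
open scoped ENNReal NNReal

noncomputable section

/-! Replacing `X^{(j)}` by `X'` turns `m(X_{π_j})` into `h + g` with
`h = m_j(X')` independent of `X^{(-j)}` and `g = ∑_{k ≠ j} m_k(X^{(k)})` a function of `X^{(-j)}`.
Hence `E[h + g | X^{(-j)}] = E h + g`, the residual is `h - E h`, and its mean square is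
`Var(m_j(X')) = Var(m_j(X^{(j)}))` because `X'` and `X^{(j)}` have the same law. -/

theorem sum_apply_update_eq_add_sum_erase {ι α β : Type*} [Fintype ι] [DecidableEq ι]
    [AddCommMonoid β] (f : ι → α → β) (x : ι → α) (j : ι) (y : α) :
    ∑ k, f k (Function.update x j y k) = f j y + ∑ k ∈ Finset.univ.erase j, f k (x k) := by
  rw [← Finset.add_sum_erase _ _ (Finset.mem_univ j), Function.update_self]
  congr 1
  refine Finset.sum_congr rfl fun k hk => ?_
  rw [Function.update_of_ne (Finset.ne_of_mem_erase hk)]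

section SigmaWithout

variable {Ω : Type*} [MeasurableSpace Ω] {p : ℕ} (X : Ω → Fin p → ℝ) (j : Fin p)

theorem sigmaWithout_le_comap : sigmaWithout X j ≤ MeasurableSpace.comap X inferInstance := by
  have hrestrict : Measurable fun v : Fin p → ℝ => fun k : {k : Fin p // k ≠ j} => v k :=
    measurable_pi_lambda _ fun k => measurable_pi_apply _
  exact (hrestrict.comp (comap_measurable X)).comap_le

theorem measurable_sigmaWithout_apply {k : Fin p} (hk : k ≠ j) :
    Measurable[sigmaWithout X j] fun ω => X ω k :=
  (measurable_pi_apply (⟨k, hk⟩ : {k : Fin p // k ≠ j})).comp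
    (comap_measurable fun ω (k : {k : Fin p // k ≠ j}) => X ω k)

end SigmaWithout

section IndepSum

variable {Ω : Type*} {m mh mΩ : MeasurableSpace Ω} {μ : Measure Ω}

theorem condExp_add_eq_integral_add_of_indep {E : Type*} [NormedAddCommGroup E]
    [NormedSpace ℝ E] [CompleteSpace E] {h g : Ω → E} (hmh : mh ≤ mΩ) (hm : m ≤ mΩ)
    [SigmaFinite (μ.trim hm)] (hh : StronglyMeasurable[mh] h) (hind : Indep mh m μ)
    (hg : StronglyMeasurable[m] g) (hhi : Integrable h μ) (hgi : Integrable g μ) :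
    μ[fun ω => h ω + g ω | m] =ᵐ[μ] fun ω => μ[h] + g ω :=
  calc μ[fun ω => h ω + g ω | m]
      =ᵐ[μ] μ[h | m] + μ[g | m] := condExp_add hhi hgi m
    _ =ᵐ[μ] fun ω => μ[h] + g ω :=
      (condExp_indep_eq hmh hm hh hind).add (condExp_of_stronglyMeasurable hm hg hgi).eventuallyEq

theorem integral_sq_sub_condExp_eq_variance_of_indep {h g : Ω → ℝ} (hmh : mh ≤ mΩ)
    (hm : m ≤ mΩ) [SigmaFinite (μ.trim hm)] (hh : StronglyMeasurable[mh] h)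
    (hind : Indep mh m μ) (hg : StronglyMeasurable[m] g) (hhi : Integrable h μ)
    (hgi : Integrable g μ) :
    ∫ ω, (h ω + g ω - μ[fun ω' => h ω' + g ω' | m] ω) ^ 2 ∂μ = variance h μ := by
  rw [variance_eq_integral (hh.mono hmh).measurable.aemeasurable]
  refine integral_congr_ae ?_
  filter_upwards [condExp_add_eq_integral_add_of_indep hmh hm hh hind hg hhi hgi] with ω hω
  rw [hω]
  ring

end IndepSum

/-- If the regression function is additive, `m(x) = ∑ₖ mₖ(x⁽ᵏ⁾)`, then the unnormalized
marginal total Sobol index `E[Var(m(X_{π_j}) | X^{(-j)})]` equals `Var(m_j(X^{(j)}))`. -/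
theorem marginal_total_sobol_of_additive
    {Ω : Type*} [MeasureSpace Ω] [IsProbabilityMeasure (ℙ : Measure Ω)]
    {p : ℕ} (j : Fin p) (X : Ω → Fin p → ℝ) (X' : Ω → ℝ)
    (mk : Fin p → ℝ → ℝ) (hmk : ∀ k, Measurable (mk k))
    (hL2 : ∀ k, MemLp (fun ω => mk k (X ω k)) 2 ℙ)
    (hX : Measurable X) (hX' : Measurable X')
    -- `X'` is an independent copy of the `j`-th component of `X`
    (hcopy : Measure.map X' ℙ = Measure.map (fun ω => X ω j) ℙ)
    (hindep : IndepFun X' X ℙ) :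
    ∫ ω, ((∑ k, mk k (permuted X j X' ω k))
        - (ℙ[fun ω' => ∑ k, mk k (permuted X j X' ω' k) | sigmaWithout X j]) ω) ^ 2 ∂ℙ
      = variance (fun ω => mk j (X ω j)) ℙ := by
  have hident : IdentDistrib (fun ω => mk j (X' ω)) (fun ω => mk j (X ω j)) :=
    (IdentDistrib.mk hX'.aemeasurable ((measurable_pi_apply j).comp hX).aemeasurable
      hcopy).comp (hmk j)
  have hind : Indep (MeasurableSpace.comap X' inferInstance) (sigmaWithout X j) ℙ :=
    indep_of_indep_of_le_right ((IndepFun_iff_Indep X' X ℙ).1 hindep)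
      (sigmaWithout_le_comap X j)
  have hrestMeas : StronglyMeasurable[sigmaWithout X j]
      fun ω => ∑ k ∈ Finset.univ.erase j, mk k (X ω k) :=
    (Finset.measurable_sum _ fun k hk => (hmk k).comp
      (measurable_sigmaWithout_apply X j (Finset.ne_of_mem_erase hk))).stronglyMeasurable
  have hjInt : Integrable (fun ω => mk j (X' ω)) ℙ :=
    hident.integrable_iff.2 ((hL2 j).integrable one_le_two)
  have hrestInt : Integrable (fun ω => ∑ k ∈ Finset.univ.erase j, mk k (X ω k)) ℙ :=
    (memLp_finsetSum _ fun k _ => hL2 k).integrable one_le_two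
  simp only [permuted, sum_apply_update_eq_add_sum_erase]
  exact (integral_sq_sub_condExp_eq_variance_of_indep hX'.comap_le
    ((sigmaWithout_le_comap X j).trans hX.comap_le)
    ((hmk j).comp (comap_measurable X')).stronglyMeasurable hind hrestMeas hjInt hrestInt).trans
    hident.variance_eq
end
end

section
/- Let X be a random vector, X^{(-j)} its j-th-component-removed version, and X_{π_j} the vector X with j-th component replaced by an independent copy of X^{(j)}. Then m(X) and m(X_{π_j}) are independent conditionally on X^{(-j)}, and consequently E[(m(X) - m(X_{π_j}))^2] = E[Var(m(X) | X^{(-j)})] + E[Var(m(X_{π_j}) | X^{(-j)})] + E[(E[m(X)|X^{(-j)}] - E[m(X_{π_j})|X^{(-j)}])^2]. -/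
/-! Conditioning on all of `X`, the independent resample `X'` integrates out:
`E[φ(X, X') | X] = ∫ φ(X, y) dP_{X'}(y)`. For `φ = F(X) · h(X^{(-j)}, X')` the right side is
`F(X) · H(X^{(-j)})` with `H(z) = ∫ h(z, y) dP_{X'}(y)`, so by the tower property
`E[F(X) h | X^{(-j)}] = E[F(X) | X^{(-j)}] · H(X^{(-j)})`, and also `E[h | X^{(-j)}] = H(X^{(-j)})`.
Since `X_{π_j}` is a function of `(X^{(-j)}, X')`, indicators give the conditional independence,
and `F = m`, `h(X^{(-j)}, X') = m(X_{π_j})` show that `m(X)` and `m(X_{π_j})` are conditionally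
uncorrelated. Expanding the square with `E[(f - E[f|𝒢])²] = E[f²] - E[E[f|𝒢]²]` then yields the
decomposition. -/

open MeasureTheory ProbabilityTheory
open scoped ENNReal NNReal

noncomputable section

theorem Function.update_eq_piEquivPiSubtypeProd_symm {ι β : Type*} [DecidableEq ι]
    (x : ι → β) (i : ι) (y : β) :
    Function.update x i y
      = (Equiv.piEquivPiSubtypeProd (· = i) fun _ => β).symm (fun _ => y, fun k => x k) := by
  funext k
  by_cases hk : k = i
  · subst hk; simp
  · simp [hk]

section IndependentResampling

variable {Ω β γ δ : Type*} {mΩ : MeasurableSpace Ω} {μ : Measure Ω}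
  {mβ : MeasurableSpace β} {mγ : MeasurableSpace γ} {mδ : MeasurableSpace δ}
  [StandardBorelSpace γ] [Nonempty γ] {W : Ω → β} {Y : Ω → γ}

theorem condExp_comp_prodMk_ae_eq_integral_of_indepFun [IsFiniteMeasure μ]
    {E : Type*} [NormedAddCommGroup E] [NormedSpace ℝ E] [CompleteSpace E]
    (hW : Measurable W) (hY : Measurable Y) (hWY : IndepFun W Y μ)
    {f : β × γ → E} (hf : StronglyMeasurable f) (hfi : Integrable (fun ω => f (W ω, Y ω)) μ) :
    μ[fun ω => f (W ω, Y ω) | mβ.comap W] =ᵐ[μ] fun ω => ∫ y, f (W ω, y) ∂(μ.map Y) := by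
  have hcond : condDistrib Y W μ =ᵐ[μ.map W] Kernel.const β (μ.map Y) := by
    rw [condDistrib_ae_eq_iff_measure_eq_compProd W hY.aemeasurable, Measure.compProd_const]
    exact (indepFun_iff_map_prod_eq_prod_map_map hW.aemeasurable hY.aemeasurable).mp hWY
  filter_upwards [condExp_prod_ae_eq_integral_condDistrib hW hY.aemeasurable hf hfi,
    ae_of_ae_map hW.aemeasurable hcond] with ω hω hω'
  rw [hω, hω', Kernel.const_apply]

theorem condExp_comp_prodMk_ae_eq_condExp_integral_of_indepFun [IsFiniteMeasure μ]
    {E : Type*} [NormedAddCommGroup E] [NormedSpace ℝ E] [CompleteSpace E]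
    {r : β → δ} (hW : Measurable W) (hY : Measurable Y) (hr : Measurable r)
    (hWY : IndepFun W Y μ) {f : β × γ → E} (hf : StronglyMeasurable f)
    (hfi : Integrable (fun ω => f (W ω, Y ω)) μ) :
    μ[fun ω => f (W ω, Y ω) | mδ.comap fun ω => r (W ω)]
      =ᵐ[μ] μ[fun ω => ∫ y, f (W ω, y) ∂(μ.map Y) | mδ.comap fun ω => r (W ω)] :=
  (condExp_condExp_of_le (hr.comp (comap_measurable W)).comap_le hW.comap_le).symm.trans
    (condExp_congr_ae (condExp_comp_prodMk_ae_eq_integral_of_indepFun hW hY hWY hf hfi))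

theorem condExp_mul_ae_eq_mul_condExp_of_indepFun [IsProbabilityMeasure μ]
    {r : β → δ} (hW : Measurable W) (hY : Measurable Y) (hr : Measurable r)
    (hWY : IndepFun W Y μ) {F : β → ℝ} (hF : Measurable F)
    (hFi : Integrable (fun ω => F (W ω)) μ)
    {h : δ × γ → ℝ} (hh : Measurable h) {C : ℝ} (hC : ∀ z, ‖h z‖ ≤ C) :
    μ[fun ω => F (W ω) * h (r (W ω), Y ω) | mδ.comap fun ω => r (W ω)]
      =ᵐ[μ] μ[fun ω => F (W ω) | mδ.comap fun ω => r (W ω)]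
        * μ[fun ω => h (r (W ω), Y ω) | mδ.comap fun ω => r (W ω)] := by
  have : IsProbabilityMeasure (μ.map Y) := Measure.isProbabilityMeasure_map hY.aemeasurable
  set H : Ω → ℝ := fun ω => ∫ y, h (r (W ω), y) ∂(μ.map Y)
  have hH : StronglyMeasurable[mδ.comap fun ω => r (W ω)] H :=
    (hh.stronglyMeasurable.integral_prod_right' (ν := μ.map Y)).comp_measurable
      (comap_measurable _)
  have hH_meas : AEStronglyMeasurable H μ :=
    (hH.mono (hr.comp hW).comap_le).aestronglyMeasurable
  have hH_le : ∀ ω, ‖H ω‖ ≤ C := fun ω => by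
    simpa using norm_integral_le_of_norm_le_const (ae_of_all (μ.map Y) fun y => hC (r (W ω), y))
  have hh_meas : AEStronglyMeasurable (fun ω => h (r (W ω), Y ω)) μ :=
    (hh.comp ((hr.comp hW).prodMk hY)).aestronglyMeasurable
  have hFh : μ[fun ω => F (W ω) * h (r (W ω), Y ω) | mδ.comap fun ω => r (W ω)]
      =ᵐ[μ] μ[fun ω => F (W ω) * H ω | mδ.comap fun ω => r (W ω)] := by
    simpa only [integral_const_mul] using
      condExp_comp_prodMk_ae_eq_condExp_integral_of_indepFun hW hY hr hWY
        (f := fun q => F q.1 * h (r q.1, q.2)) (by fun_prop)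
        ((hFi.bdd_mul hh_meas (ae_of_all _ fun ω => hC _)).congr
          (ae_of_all _ fun ω => mul_comm _ _))
  have hh' : μ[fun ω => h (r (W ω), Y ω) | mδ.comap fun ω => r (W ω)] =ᵐ[μ] H :=
    (condExp_comp_prodMk_ae_eq_condExp_integral_of_indepFun hW hY hr hWY
      (f := fun q => h (r q.1, q.2)) (by fun_prop)
      (.of_bound hh_meas C (ae_of_all _ fun ω => hC _))).trans
      (.of_eq (condExp_of_stronglyMeasurable (hr.comp hW).comap_le hH
        (.of_bound hH_meas C (ae_of_all _ hH_le))))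
  calc μ[fun ω => F (W ω) * h (r (W ω), Y ω) | mδ.comap fun ω => r (W ω)]
      =ᵐ[μ] μ[fun ω => F (W ω) * H ω | mδ.comap fun ω => r (W ω)] := hFh
    _ =ᵐ[μ] μ[fun ω => F (W ω) | mδ.comap fun ω => r (W ω)] * H :=
      condExp_mul_of_stronglyMeasurable_right hH
        ((hFi.bdd_mul hH_meas (ae_of_all _ hH_le)).congr (ae_of_all _ fun ω => mul_comm _ _))
        hFi
    _ =ᵐ[μ] _ := (ae_eq_refl _).mul hh'.symm

theorem condIndepFun_prodMk_of_indepFun [IsProbabilityMeasure μ] [StandardBorelSpace Ω]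
    {r : β → δ} (hW : Measurable W) (hY : Measurable Y) (hr : Measurable r)
    (hWY : IndepFun W Y μ) :
    CondIndepFun (mδ.comap fun ω => r (W ω)) (hr.comp hW).comap_le W
      (fun ω => (r (W ω), Y ω)) μ := by
  refine (condIndepFun_iff_condExp_inter_preimage_eq_mul hW ((hr.comp hW).prodMk hY)).2 ?_
  intro s t hs ht
  convert condExp_mul_ae_eq_mul_condExp_of_indepFun hW hY hr hWY
    (F := s.indicator 1) (h := t.indicator 1) (measurable_const.indicator hs)
    ((integrable_const 1).indicator (hW hs)) (measurable_const.indicator ht) (C := 1)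
    (fun z => by by_cases hz : z ∈ t <;> simp [hz]) using 2
  exacts [Set.inter_indicator_one, rfl]

end IndependentResampling

section ConditionalVariance

variable {Ω : Type*} {m m₀ : MeasurableSpace Ω} {μ : Measure Ω} {f g : Ω → ℝ}

theorem integral_sub_sq (hf : MemLp f 2 μ) (hg : MemLp g 2 μ) :
    ∫ ω, (f ω - g ω) ^ 2 ∂μ = ∫ ω, f ω ^ 2 ∂μ - 2 * ∫ ω, f ω * g ω ∂μ + ∫ ω, g ω ^ 2 ∂μ := by
  have hfg : Integrable (fun ω => 2 * (f ω * g ω)) μ := (hf.integrable_mul hg).const_mul 2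
  have hf_sub : Integrable (fun ω => f ω ^ 2 - 2 * (f ω * g ω)) μ := hf.integrable_sq.sub hfg
  simp_rw [sub_sq, mul_assoc]
  rw [integral_add hf_sub hg.integrable_sq, integral_sub hf.integrable_sq hfg, integral_const_mul]

theorem integral_sq_sub_condExp [IsFiniteMeasure μ] (hm : m ≤ m₀) (hf : MemLp f 2 μ) :
    ∫ ω, (f ω - (μ[f | m]) ω) ^ 2 ∂μ = ∫ ω, f ω ^ 2 ∂μ - ∫ ω, (μ[f | m]) ω ^ 2 ∂μ := by
  have : IsFiniteMeasure (μ.trim hm) := isFiniteMeasure_trim hm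
  calc ∫ ω, (f ω - (μ[f | m]) ω) ^ 2 ∂μ = ∫ ω, (Var[f; μ | m]) ω ∂μ := (integral_condExp hm).symm
    _ = ∫ ω, ((μ[f ^ 2 | m]) ω - (μ[f | m]) ω ^ 2) ∂μ :=
      integral_congr_ae (condVar_ae_eq_condExp_sq_sub_sq_condExp hm hf)
    _ = _ := by
      rw [integral_sub integrable_condExp (hf.condExp one_le_two).integrable_sq,
        integral_condExp hm]
      rfl

theorem integral_sub_sq_eq_of_condExp_mul_ae_eq [IsFiniteMeasure μ] (hm : m ≤ m₀) (hf : MemLp f 2 μ)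
    (hg : MemLp g 2 μ) (hfg : μ[f * g | m] =ᵐ[μ] μ[f | m] * μ[g | m]) :
    ∫ ω, (f ω - g ω) ^ 2 ∂μ = ∫ ω, (f ω - (μ[f | m]) ω) ^ 2 ∂μ
      + ∫ ω, (g ω - (μ[g | m]) ω) ^ 2 ∂μ + ∫ ω, ((μ[f | m]) ω - (μ[g | m]) ω) ^ 2 ∂μ := by
  have : IsFiniteMeasure (μ.trim hm) := isFiniteMeasure_trim hm
  have hcross : ∫ ω, f ω * g ω ∂μ = ∫ ω, (μ[f | m]) ω * (μ[g | m]) ω ∂μ := by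
    rw [← integral_condExp hm]
    exact integral_congr_ae hfg
  rw [integral_sub_sq hf hg, integral_sub_sq (hf.condExp one_le_two) (hg.condExp one_le_two),
    integral_sq_sub_condExp hm hf, integral_sq_sub_condExp hm hg, hcross]
  ring

end ConditionalVariance

theorem mda_decomposition_general
    {Ω : Type*} [MeasureSpace Ω] [StandardBorelSpace Ω]
    [IsProbabilityMeasure (ℙ : Measure Ω)]
    {p : ℕ} (j : Fin p) (X : Ω → Fin p → ℝ) (X' : Ω → ℝ)
    (m : (Fin p → ℝ) → ℝ) (hmMeas : Measurable m) (hmBdd : ∃ C, ∀ x, |m x| ≤ C)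
    (hX : Measurable X) (hX' : Measurable X')
    (hindep : IndepFun X' X ℙ) :
    CondIndepFun (sigmaWithout X j)
        (Measurable.comap_le
          (measurable_pi_lambda _ fun k => (measurable_pi_apply (k : Fin p)).comp hX))
        (fun ω => m (X ω)) (fun ω => m (permuted X j X' ω)) ℙ ∧
    ∫ ω, (m (X ω) - m (permuted X j X' ω)) ^ 2 ∂ℙ
      = (∫ ω, (m (X ω) - (ℙ[fun ω' => m (X ω') | sigmaWithout X j]) ω) ^ 2 ∂ℙ)
        + (∫ ω, (m (permuted X j X' ω)
            - (ℙ[fun ω' => m (permuted X j X' ω') | sigmaWithout X j]) ω) ^ 2 ∂ℙ)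
        + (∫ ω, ((ℙ[fun ω' => m (X ω') | sigmaWithout X j]) ω
            - (ℙ[fun ω' => m (permuted X j X' ω') | sigmaWithout X j]) ω) ^ 2 ∂ℙ) := by
  obtain ⟨C, hC⟩ := hmBdd
  have hm_le : ∀ x, ‖m x‖ ≤ C := fun x => (Real.norm_eq_abs _).trans_le (hC x)
  set r : (Fin p → ℝ) → {k : Fin p // k ≠ j} → ℝ := fun x k => x k
  set ψ : ({k : Fin p // k ≠ j} → ℝ) × ℝ → Fin p → ℝ :=
    fun q => (Equiv.piEquivPiSubtypeProd (· = j) fun _ => ℝ).symm (fun _ => q.2, q.1)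
  have hr : Measurable r := measurable_pi_lambda _ fun k => measurable_pi_apply _
  have hψ : Measurable ψ :=
    (measurable_piEquivPiSubtypeProd_symm (X := fun _ : Fin p => ℝ) (· = j)).comp
      ((measurable_pi_lambda _ fun _ => measurable_snd).prodMk measurable_fst)
  have hperm : permuted X j X' = fun ω => ψ (r (X ω), X' ω) :=
    funext fun ω => Function.update_eq_piEquivPiSubtypeProd_symm (X ω) j (X' ω)
  have hmψ : Measurable fun q => m (ψ q) := hmMeas.comp hψ
  have hmX : MemLp (fun ω => m (X ω)) 2 ℙ :=
    .of_bound (hmMeas.comp hX).aestronglyMeasurable C (ae_of_all _ fun ω => hm_le _)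
  have hmX' : MemLp (fun ω => m (ψ (r (X ω), X' ω))) 2 ℙ :=
    .of_bound (hmψ.comp ((hr.comp hX).prodMk hX')).aestronglyMeasurable C
      (ae_of_all _ fun ω => hm_le _)
  rw [hperm]
  exact ⟨(condIndepFun_prodMk_of_indepFun hX hX' hr hindep.symm).comp hmMeas hmψ,
    integral_sub_sq_eq_of_condExp_mul_ae_eq (hr.comp hX).comap_le hmX hmX'
      (condExp_mul_ae_eq_mul_condExp_of_indepFun hX hX' hr hindep.symm hmMeas
        (hmX.integrable one_le_two) hmψ fun q => hm_le _)⟩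

/-- `m(X)` and `m(X_{π_j})` are independent conditionally on `X^{(-j)}`, and the
MDA limit decomposes as total Sobol + marginal total Sobol + cross term. -/
theorem mda_decomposition
    {Ω : Type*} [MeasureSpace Ω] [StandardBorelSpace Ω] [Nonempty Ω]
    [IsProbabilityMeasure (ℙ : Measure Ω)]
    {p : ℕ} (j : Fin p) (X : Ω → Fin p → ℝ) (X' : Ω → ℝ)
    (m : (Fin p → ℝ) → ℝ) (hmMeas : Measurable m) (hmBdd : ∃ C, ∀ x, |m x| ≤ C)
    (hL2 : MemLp (fun ω => m (X ω)) 2 ℙ)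
    (hX : Measurable X) (hX' : Measurable X')
    -- `X'` is an independent copy of the `j`-th component of `X`
    (hcopy : Measure.map X' ℙ = Measure.map (fun ω => X ω j) ℙ)
    (hindep : IndepFun X' X ℙ) :
    CondIndepFun (sigmaWithout X j)
        (Measurable.comap_le
          (measurable_pi_lambda _ fun k => (measurable_pi_apply (k : Fin p)).comp hX))
        (fun ω => m (X ω)) (fun ω => m (permuted X j X' ω)) ℙ ∧
    ∫ ω, (m (X ω) - m (permuted X j X' ω)) ^ 2 ∂ℙ
      = (∫ ω, (m (X ω) - (ℙ[fun ω' => m (X ω') | sigmaWithout X j]) ω) ^ 2 ∂ℙ)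
        + (∫ ω, (m (permuted X j X' ω)
            - (ℙ[fun ω' => m (permuted X j X' ω') | sigmaWithout X j]) ω) ^ 2 ∂ℙ)
        + (∫ ω, ((ℙ[fun ω' => m (X ω') | sigmaWithout X j]) ω
            - (ℙ[fun ω' => m (permuted X j X' ω') | sigmaWithout X j]) ω) ^ 2 ∂ℙ) :=
  mda_decomposition_general j X X' m hmMeas hmBdd hX hX' hindep
end
end

section
/- With X_{π_j} as X with its j-th component replaced by an independent copy of X^{(j)}, one has E[(m(X) - E[m(X_{π_j})|X^{(-j)}])^2] = E[Var(m(X)|X^{(-j)})] + E[(E[m(X)|X^{(-j)}] - E[m(X_{π_j})|X^{(-j)}])^2]. -/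
open MeasureTheory ProbabilityTheory
open scoped ENNReal NNReal

noncomputable section

/-! Pythagoras in `L²`: `E[m(X_{π_j}) | X^{(-j)}]` is an `X^{(-j)}`-measurable square-integrable
function, and `m(X) - E[m(X) | X^{(-j)}]` is orthogonal to every such function (pull out what is
known, then the tower property), so the squared distance from `m(X)` to the former splits into the
residual of the projection plus the squared distance between the two conditional expectations. -/

lemma sigmaWithout_le {Ω : Type*} [MeasurableSpace Ω] {p : ℕ} {X : Ω → Fin p → ℝ}
    (hX : Measurable X) (j : Fin p) : sigmaWithout X j ≤ ‹MeasurableSpace Ω› :=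
  Measurable.comap_le (measurable_pi_lambda _ fun k => (measurable_pi_apply (k : Fin p)).comp hX)

section Pythagoras

variable {Ω : Type*} {m m₀ : MeasurableSpace Ω} {μ : Measure Ω} {f g : Ω → ℝ}

lemma integral_mul_condExp (hm : m ≤ m₀) [SigmaFinite (μ.trim hm)]
    (hg : StronglyMeasurable[m] g) (hgf : Integrable (g * f) μ) (hf : Integrable f μ) :
    ∫ ω, g ω * (μ[f | m]) ω ∂μ = ∫ ω, g ω * f ω ∂μ :=
  calc ∫ ω, g ω * (μ[f | m]) ω ∂μ = ∫ ω, (μ[g * f | m]) ω ∂μ :=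
        integral_congr_ae (condExp_mul_of_stronglyMeasurable_left hg hgf hf).symm
    _ = ∫ ω, g ω * f ω ∂μ := integral_condExp hm

lemma integral_mul_sub_condExp_eq_zero (hm : m ≤ m₀) [IsFiniteMeasure μ]
    (hg : StronglyMeasurable[m] g) (hg2 : MemLp g 2 μ) (hf : MemLp f 2 μ) :
    ∫ ω, g ω * (f ω - (μ[f | m]) ω) ∂μ = 0 := by
  have hgf : Integrable (fun ω => g ω * f ω) μ := hg2.integrable_mul hf
  have hgcf : Integrable (fun ω => g ω * (μ[f | m]) ω) μ :=
    hg2.integrable_mul (hf.condExp (by norm_num))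
  simp only [mul_sub]
  rw [integral_sub hgf hgcf, integral_mul_condExp hm hg hgf (hf.integrable (by norm_num)),
    sub_self]

lemma integral_add_sq {u v : Ω → ℝ} (hu : MemLp u 2 μ) (hv : MemLp v 2 μ) :
    ∫ ω, (u ω + v ω) ^ 2 ∂μ
      = ∫ ω, u ω ^ 2 ∂μ + ∫ ω, v ω ^ 2 ∂μ + 2 * ∫ ω, v ω * u ω ∂μ := by
  have hu2 : Integrable (fun ω => u ω ^ 2) μ := hu.integrable_sq
  have hv2 : Integrable (fun ω => v ω ^ 2) μ := hv.integrable_sq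
  have hvu : Integrable (fun ω => 2 * (v ω * u ω)) μ := (hv.integrable_mul hu).const_mul 2
  have hexpand : ∀ ω, (u ω + v ω) ^ 2 = u ω ^ 2 + v ω ^ 2 + 2 * (v ω * u ω) := fun ω => by ring
  simp only [hexpand]
  rw [integral_add (f := fun ω => u ω ^ 2 + v ω ^ 2) (hu2.add hv2) hvu,
    integral_add hu2 hv2, integral_const_mul]

theorem integral_sq_sub_eq_integral_sq_sub_condExp_add (hm : m ≤ m₀) [IsFiniteMeasure μ]
    (hf : MemLp f 2 μ) (hg : StronglyMeasurable[m] g) (hg2 : MemLp g 2 μ) :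
    ∫ ω, (f ω - g ω) ^ 2 ∂μ
      = ∫ ω, (f ω - (μ[f | m]) ω) ^ 2 ∂μ + ∫ ω, ((μ[f | m]) ω - g ω) ^ 2 ∂μ := by
  have hcf : MemLp (μ[f | m]) 2 μ := hf.condExp (by norm_num)
  calc ∫ ω, (f ω - g ω) ^ 2 ∂μ
        = ∫ ω, ((f ω - (μ[f | m]) ω) + ((μ[f | m]) ω - g ω)) ^ 2 ∂μ := by
          simp only [sub_add_sub_cancel]
    _ = ∫ ω, (f ω - (μ[f | m]) ω) ^ 2 ∂μ + ∫ ω, ((μ[f | m]) ω - g ω) ^ 2 ∂μ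
          + 2 * ∫ ω, ((μ[f | m]) ω - g ω) * (f ω - (μ[f | m]) ω) ∂μ :=
          integral_add_sq (hf.sub hcf) (hcf.sub hg2)
    _ = ∫ ω, (f ω - (μ[f | m]) ω) ^ 2 ∂μ + ∫ ω, ((μ[f | m]) ω - g ω) ^ 2 ∂μ := by
          have hcross : ∫ ω, ((μ[f | m]) ω - g ω) * (f ω - (μ[f | m]) ω) ∂μ = 0 :=
            integral_mul_sub_condExp_eq_zero hm (stronglyMeasurable_condExp.sub hg)
              (hcf.sub hg2) hf
          rw [hcross, mul_zero, add_zero]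

end Pythagoras

theorem ik_mda_decomposition_general
    {Ω : Type*} [MeasureSpace Ω] [IsProbabilityMeasure (ℙ : Measure Ω)]
    {p : ℕ} (j : Fin p) (X : Ω → Fin p → ℝ) (X' : Ω → ℝ)
    (m : (Fin p → ℝ) → ℝ)
    (hL2 : MemLp (fun ω => m (X ω)) 2 ℙ)
    (hL2π : MemLp (fun ω => m (permuted X j X' ω)) 2 ℙ)
    (hX : Measurable X) :
    ∫ ω, (m (X ω) - (ℙ[fun ω' => m (permuted X j X' ω') | sigmaWithout X j]) ω) ^ 2 ∂ℙ
      = (∫ ω, (m (X ω) - (ℙ[fun ω' => m (X ω') | sigmaWithout X j]) ω) ^ 2 ∂ℙ)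
        + (∫ ω, ((ℙ[fun ω' => m (X ω') | sigmaWithout X j]) ω
            - (ℙ[fun ω' => m (permuted X j X' ω') | sigmaWithout X j]) ω) ^ 2 ∂ℙ) :=
  integral_sq_sub_eq_integral_sq_sub_condExp_add (sigmaWithout_le hX j) hL2
    stronglyMeasurable_condExp (hL2π.condExp (by norm_num))

/-- The Ishwaran–Kogalur MDA limit decomposes as the unnormalized total Sobol index
plus a dependence-induced bias term:
`E[(m(X) - E[m(X_{π_j})|X^{(-j)}])²]
  = E[Var(m(X)|X^{(-j)})] + E[(E[m(X)|X^{(-j)}] - E[m(X_{π_j})|X^{(-j)}])²]`. -/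
theorem ik_mda_decomposition
    {Ω : Type*} [MeasureSpace Ω] [IsProbabilityMeasure (ℙ : Measure Ω)]
    {p : ℕ} (j : Fin p) (X : Ω → Fin p → ℝ) (X' : Ω → ℝ)
    (m : (Fin p → ℝ) → ℝ) (hmMeas : Measurable m)
    (hL2 : MemLp (fun ω => m (X ω)) 2 ℙ)
    (hL2π : MemLp (fun ω => m (permuted X j X' ω)) 2 ℙ)
    (hX : Measurable X) (hX' : Measurable X')
    -- `X'` is an independent copy of the `j`-th component of `X`
    (hcopy : Measure.map X' ℙ = Measure.map (fun ω => X ω j) ℙ)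
    (hindep : IndepFun X' X ℙ) :
    ∫ ω, (m (X ω) - (ℙ[fun ω' => m (permuted X j X' ω') | sigmaWithout X j]) ω) ^ 2 ∂ℙ
      = (∫ ω, (m (X ω) - (ℙ[fun ω' => m (X ω') | sigmaWithout X j]) ω) ^ 2 ∂ℙ)
        + (∫ ω, ((ℙ[fun ω' => m (X ω') | sigmaWithout X j]) ω
            - (ℙ[fun ω' => m (permuted X j X' ω') | sigmaWithout X j]) ω) ^ 2 ∂ℙ) :=
  ik_mda_decomposition_general j X X' m hL2 hL2π hX
end
end

section
/- If covariates are independent, then E[(m(X) - m(X_{π_j}))^2] = 2·E[Var(m(X)|X^{(-j)})], i.e., the permutation MDA limit equals twice the unnormalized total Sobol index. -/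
/-!
Let `ν` be the law of `X`, `μ` the law of `X^{(j)}` and `g x = ∫ m (update x j t) dμ(t)`.
Independence of the coordinates says that `(x, t) ↦ update x j t` maps `ν ⊗ μ` to `ν`; as `X'` is
an independent copy of `X^{(j)}`, the pair `(X, X_{π_j})` is distributed as `(x, update x j t)`
under `ν ⊗ μ`, and the same invariance identifies `g (X)` with `E[m(X) | X^{(-j)}]`.
Put `φ = m - g`. Since `g` ignores the `j`-th coordinate, `m(X) - m(X_{π_j}) = φ(X) - φ(X_{π_j})`;
both squares integrate to `E[φ(X)²]`, and the cross term vanishes because `φ` integrates to zero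
along every line parallel to the `j`-th axis.
-/

open MeasureTheory ProbabilityTheory
open scoped ENNReal NNReal

noncomputable section

theorem integral_sub_sq_eq {Ω : Type*} [MeasurableSpace Ω] {P : Measure Ω} {a b : Ω → ℝ}
    (ha : MemLp a 2 P) (hb : MemLp b 2 P) :
    ∫ ω, (a ω - b ω) ^ 2 ∂P = ∫ ω, a ω ^ 2 ∂P + ∫ ω, b ω ^ 2 ∂P - 2 * ∫ ω, a ω * b ω ∂P := by
  have hab : Integrable (fun ω => a ω * b ω) P := ha.integrable_mul hb
  simp_rw [sub_sq, mul_assoc]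
  have hsub : Integrable (fun ω => a ω ^ 2 - 2 * (a ω * b ω)) P :=
    ha.integrable_sq.sub (hab.const_mul 2)
  rw [integral_add hsub hb.integrable_sq,
    integral_sub ha.integrable_sq (hab.const_mul 2), integral_const_mul]
  ring

theorem memLp_two_integral_prod_left {X Y : Type*} [MeasurableSpace X] [MeasurableSpace Y]
    {ν : Measure X} {μ : Measure Y} [IsFiniteMeasure ν] [IsProbabilityMeasure μ] {F : X × Y → ℝ}
    (hF : MemLp F 2 (ν.prod μ)) : MemLp (fun x => ∫ y, F (x, y) ∂μ) 2 ν := by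
  have hF₁ : Integrable F (ν.prod μ) := hF.integrable one_le_two
  refine (memLp_two_iff_integrable_sq hF₁.integral_prod_left.aestronglyMeasurable).2 <|
    hF.integrable_sq.integral_prod_left.mono' (hF₁.integral_prod_left.aestronglyMeasurable.pow 2) ?_
  filter_upwards [hF₁.prod_right_ae, hF.integrable_sq.prod_right_ae] with x hx hx2
  rw [Real.norm_eq_abs, abs_of_nonneg (sq_nonneg _)]
  exact (even_two.convexOn_pow).map_integral_le (continuous_pow 2).continuousOn isClosed_univ
    (by simp) hx hx2

section Resampling

variable {ι : Type*} [DecidableEq ι] {α : ι → Type*} [∀ i, MeasurableSpace (α i)]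

theorem measurePreserving_update_prod_pi [Fintype ι] (μ : ∀ i, Measure (α i))
    [∀ i, IsProbabilityMeasure (μ i)] (j : ι) :
    MeasurePreserving (fun z => Function.update z.1 j z.2) ((Measure.pi μ).prod (μ j))
      (Measure.pi μ) := by
  refine ⟨measurable_update', (Measure.pi_eq fun s hs => ?_).symm⟩
  have hpre : (fun z : (∀ i, α i) × α j => Function.update z.1 j z.2) ⁻¹' Set.univ.pi s
      = Set.univ.pi (Function.update s j Set.univ) ×ˢ s j := by
    ext ⟨x, t⟩
    simp only [Set.mem_preimage, Set.mem_univ_pi, Set.mem_prod]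
    grind
  rw [Measure.map_apply measurable_update' (.univ_pi hs), hpre, Measure.prod_prod, Measure.pi_pi,
    ← Finset.mul_prod_erase _ _ (Finset.mem_univ j),
    ← Finset.mul_prod_erase _ _ (Finset.mem_univ j)]
  simp only [Function.update_self, measure_univ, one_mul]
  rw [mul_comm]
  congr 1
  exact Finset.prod_congr rfl fun i hi => by
    rw [Function.update_of_ne (Finset.ne_of_mem_erase hi)]

theorem measurePreserving_update_prod_map_of_iIndepFun [Fintype ι] {Ω : Type*}
    [MeasurableSpace Ω] {P : Measure Ω} [IsProbabilityMeasure P] {X : Ω → ∀ i, α i}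
    (hX : Measurable X) (hX_indep : iIndepFun (fun i ω => X ω i) P) (j : ι) :
    MeasurePreserving (fun z => Function.update z.1 j z.2)
      ((P.map X).prod (P.map fun ω => X ω j)) (P.map X) := by
  have hXi (i : ι) : Measurable fun ω => X ω i := (measurable_pi_apply i).comp hX
  have (i : ι) : IsProbabilityMeasure (P.map fun ω => X ω i) :=
    Measure.isProbabilityMeasure_map (hXi i).aemeasurable
  rw [(iIndepFun_iff_map_fun_eq_pi_map fun i => (hXi i).aemeasurable).1 hX_indep]
  exact measurePreserving_update_prod_pi _ j

variable {E : Type*} [NormedAddCommGroup E] [NormedSpace ℝ E] (j : ι) (μ : Measure (α j))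

def integralUpdate (f : (∀ i, α i) → E) (x : ∀ i, α i) : E :=
  ∫ t, f (Function.update x j t) ∂μ

variable {j μ}

@[simp]
theorem integralUpdate_update (f : (∀ i, α i) → E) (x : ∀ i, α i) (s : α j) :
    integralUpdate j μ f (Function.update x j s) = integralUpdate j μ f x := by
  simp [integralUpdate]

theorem stronglyMeasurable_integralUpdate [SFinite μ] {f : (∀ i, α i) → E}
    (hf : StronglyMeasurable f) : StronglyMeasurable (integralUpdate j μ f) :=
  (hf.comp_measurable measurable_update').integral_prod_right'

variable {ν : Measure (∀ i, α i)}

theorem integrable_integralUpdate [SFinite μ] {f : (∀ i, α i) → E}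
    (hu : MeasurePreserving (fun z => Function.update z.1 j z.2) (ν.prod μ) ν)
    (hf : Integrable f ν) : Integrable (integralUpdate j μ f) ν :=
  (hu.integrable_comp_of_integrable hf).integral_prod_left

theorem memLp_integralUpdate [IsFiniteMeasure ν] [IsProbabilityMeasure μ] {f : (∀ i, α i) → ℝ}
    (hu : MeasurePreserving (fun z => Function.update z.1 j z.2) (ν.prod μ) ν) (hf : MemLp f 2 ν) :
    MemLp (integralUpdate j μ f) 2 ν :=
  memLp_two_integral_prod_left (hf.comp_measurePreserving hu)

theorem integral_sub_update_sq [IsFiniteMeasure ν] [IsProbabilityMeasure μ] {f : (∀ i, α i) → ℝ}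
    (hu : MeasurePreserving (fun z => Function.update z.1 j z.2) (ν.prod μ) ν) (hf : MemLp f 2 ν) :
    ∫ z, (f z.1 - f (Function.update z.1 j z.2)) ^ 2 ∂(ν.prod μ)
      = 2 * ∫ x, (f x - integralUpdate j μ f x) ^ 2 ∂ν := by
  set φ : (∀ i, α i) → ℝ := fun x => f x - integralUpdate j μ f x with hφ_def
  have hφ : MemLp φ 2 ν := hf.sub (memLp_integralUpdate hu hf)
  have hφ₁ : MemLp (fun z => φ z.1) 2 (ν.prod μ) := hφ.comp_measurePreserving measurePreserving_fst
  have hφu : MemLp (fun z => φ (Function.update z.1 j z.2)) 2 (ν.prod μ) :=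
    hφ.comp_measurePreserving hu
  have hcentered : ∀ᵐ x ∂ν, integralUpdate j μ φ x = 0 := by
    filter_upwards [((hf.comp_measurePreserving hu).integrable one_le_two).prod_right_ae] with x hx
    change ∫ t, (f (Function.update x j t) - integralUpdate j μ f (Function.update x j t)) ∂μ = 0
    simp only [integralUpdate_update]
    rw [integral_sub (f := fun t => f (Function.update x j t)) hx (integrable_const _),
      integral_const, probReal_univ, one_smul, integralUpdate, sub_self]
  have hcross : ∫ z, φ z.1 * φ (Function.update z.1 j z.2) ∂(ν.prod μ) = 0 := by
    have hint : Integrable (fun z => φ z.1 * φ (Function.update z.1 j z.2)) (ν.prod μ) :=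
      hφ₁.integrable_mul hφu
    rw [integral_prod _ hint]
    refine integral_eq_zero_of_ae ?_
    filter_upwards [hcentered] with x hx
    rw [integral_const_mul]
    exact mul_eq_zero_of_right _ hx
  have hsq : ∫ z, φ (Function.update z.1 j z.2) ^ 2 ∂(ν.prod μ) = ∫ x, φ x ^ 2 ∂ν := by
    conv_rhs => rw [← hu.map_eq]
    exact (integral_map hu.measurable.aemeasurable (hu.map_eq ▸ hφ.1.pow 2)).symm
  calc ∫ z, (f z.1 - f (Function.update z.1 j z.2)) ^ 2 ∂(ν.prod μ)
      = ∫ z, (φ z.1 - φ (Function.update z.1 j z.2)) ^ 2 ∂(ν.prod μ) := by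
        simp only [hφ_def, integralUpdate_update, sub_sub_sub_cancel_right]
    _ = 2 * ∫ x, φ x ^ 2 ∂ν := by
        rw [integral_sub_sq_eq hφ₁ hφu, hcross, hsq, integral_fun_fst (fun x => φ x ^ 2),
          probReal_univ, one_smul]
        ring

theorem setIntegral_integralUpdate [SFinite ν] [SFinite μ] {f : (∀ i, α i) → E}
    (hu : MeasurePreserving (fun z => Function.update z.1 j z.2) (ν.prod μ) ν)
    (hf : Integrable f ν) {s : Set (∀ i, α i)} (hs : MeasurableSet s)
    (hs_update : ∀ x t, Function.update x j t ∈ s ↔ x ∈ s) :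
    ∫ x in s, integralUpdate j μ f x ∂ν = ∫ x in s, f x ∂ν := by
  have hpre : (fun z => Function.update z.1 j z.2) ⁻¹' s = s ×ˢ (Set.univ : Set (α j)) := by
    ext ⟨x, t⟩
    simp [hs_update]
  have hfu : Integrable (fun z => f (Function.update z.1 j z.2)) (ν.prod μ) :=
    hu.integrable_comp_of_integrable hf
  calc ∫ x in s, integralUpdate j μ f x ∂ν
      = ∫ z in s ×ˢ Set.univ, f (Function.update z.1 j z.2) ∂(ν.prod μ) := by
        rw [setIntegral_prod (fun z => f (Function.update z.1 j z.2)) hfu.integrableOn,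
          Measure.restrict_univ]
        rfl
    _ = ∫ x in s, f x ∂ν := by
        rw [← hpre, ← setIntegral_map hs (by rw [hu.map_eq]; exact hf.1) hu.measurable.aemeasurable,
          hu.map_eq]

end Resampling

theorem measurable_update_sigmaWithout {Ω : Type*} [MeasurableSpace Ω] {p : ℕ}
    (X : Ω → Fin p → ℝ) (j : Fin p) (c : ℝ) :
    Measurable[sigmaWithout X j] fun ω => Function.update (X ω) j c := by
  refine @measurable_pi_lambda _ _ _ (sigmaWithout X j) _ _ fun i => ?_
  rcases eq_or_ne i j with rfl | hi
  · simp only [Function.update_self]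
    exact measurable_const
  · simp only [Function.update_of_ne hi]
    exact (measurable_pi_apply (X := fun _ : {k : Fin p // k ≠ j} => ℝ) ⟨i, hi⟩).comp
      (comap_measurable _)

theorem condExp_sigmaWithout_ae_eq {Ω : Type*} [MeasurableSpace Ω] {P : Measure Ω}
    [IsFiniteMeasure P] {p : ℕ} {X : Ω → Fin p → ℝ} (hX : Measurable X) {j : Fin p}
    {μ : Measure ℝ} [SFinite μ]
    (hu : MeasurePreserving (fun z => Function.update z.1 j z.2) ((P.map X).prod μ) (P.map X))
    {E : Type*} [NormedAddCommGroup E] [NormedSpace ℝ E] [CompleteSpace E]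
    {f : (Fin p → ℝ) → E} (hfm : StronglyMeasurable f) (hf : Integrable f (P.map X)) :
    P[fun ω => f (X ω) | sigmaWithout X j] =ᵐ[P] fun ω => integralUpdate j μ f (X ω) := by
  set g := integralUpdate j μ f
  have hle : sigmaWithout X j ≤ ‹MeasurableSpace Ω› :=
    Measurable.comap_le (measurable_pi_lambda _ fun k => (measurable_pi_apply _).comp hX)
  have hfX : Integrable (fun ω => f (X ω)) P := (integrable_map_measure hf.1 hX.aemeasurable).1 hf
  have hg : Integrable g (P.map X) := integrable_integralUpdate hu hf
  have hgX : Integrable (fun ω => g (X ω)) P := (integrable_map_measure hg.1 hX.aemeasurable).1 hg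
  refine (ae_eq_condExp_of_forall_setIntegral_eq hle hfX (fun s _ _ => hgX.integrableOn) ?_ ?_).symm
  · rintro _ ⟨A, hA, rfl⟩ _
    set B : Set (Fin p → ℝ) := {x | (fun k : {k : Fin p // k ≠ j} => x k) ∈ A}
    have hB : MeasurableSet B := measurable_pi_lambda _ (fun k => measurable_pi_apply _) hA
    have hB_update : ∀ x t, Function.update x j t ∈ B ↔ x ∈ B := fun x t => by
      simp only [B, Set.mem_ofPred_eq]
      congr! 2 with k
      exact Function.update_of_ne k.2 _ _
    change ∫ ω in X ⁻¹' B, g (X ω) ∂P = ∫ ω in X ⁻¹' B, f (X ω) ∂P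
    rw [← setIntegral_map hB hg.1 hX.aemeasurable, ← setIntegral_map hB hf.1 hX.aemeasurable,
      setIntegral_integralUpdate hu hf hB hB_update]
  · have hg_update : (fun ω => g (X ω)) = fun ω => g (Function.update (X ω) j 0) := by
      simp [g]
    change AEStronglyMeasurable[sigmaWithout X j] (fun ω => g (X ω)) P
    rw [hg_update]
    exact ((stronglyMeasurable_integralUpdate hfm).comp_measurable
      (measurable_update_sigmaWithout X j 0)).aestronglyMeasurable

/-- If the covariates are independent, the permutation MDA limit equals twice the
unnormalized total Sobol index: `E[(m(X) - m(X_{π_j}))²] = 2 E[Var(m(X)|X^{(-j)})]`. -/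
theorem mda_limit_indep
    {Ω : Type*} [MeasureSpace Ω] [IsProbabilityMeasure (ℙ : Measure Ω)]
    {p : ℕ} (j : Fin p) (X : Ω → Fin p → ℝ) (X' : Ω → ℝ)
    (m : (Fin p → ℝ) → ℝ) (hmMeas : Measurable m)
    (hL2 : MemLp (fun ω => m (X ω)) 2 ℙ)
    (hX : Measurable X) (hX' : Measurable X')
    -- the components of `X` are mutually independent
    (hiIndep : iIndepFun (fun i ω => X ω i) ℙ)
    -- `X'` is an independent copy of the `j`-th component of `X`
    (hcopy : Measure.map X' ℙ = Measure.map (fun ω => X ω j) ℙ)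
    (hindep : IndepFun X' X ℙ) :
    ∫ ω, (m (X ω) - m (permuted X j X' ω)) ^ 2 ∂ℙ
      = 2 * ∫ ω, (m (X ω) - (ℙ[fun ω' => m (X ω') | sigmaWithout X j]) ω) ^ 2 ∂ℙ := by
  set ν := Measure.map X ℙ
  set μ := Measure.map (fun ω => X ω j) ℙ
  have : IsProbabilityMeasure μ :=
    Measure.isProbabilityMeasure_map ((measurable_pi_apply j).comp hX).aemeasurable
  have hu : MeasurePreserving (fun z => Function.update z.1 j z.2) (ν.prod μ) ν :=
    measurePreserving_update_prod_map_of_iIndepFun hX hiIndep j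
  have hjoint : Measure.map (fun ω => (X ω, X' ω)) ℙ = ν.prod μ := by
    rw [(indepFun_iff_map_prod_eq_prod_map_map hX.aemeasurable hX'.aemeasurable).1 hindep.symm,
      hcopy]
  have hm : MemLp m 2 ν := (memLp_map_measure_iff hmMeas.aestronglyMeasurable hX.aemeasurable).2 hL2
  have hg : Measurable (integralUpdate j μ m) :=
    (stronglyMeasurable_integralUpdate hmMeas.stronglyMeasurable).measurable
  calc ∫ ω, (m (X ω) - m (permuted X j X' ω)) ^ 2 ∂ℙ
      = ∫ z, (m z.1 - m (Function.update z.1 j z.2)) ^ 2 ∂(ν.prod μ) := by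
        rw [← hjoint, integral_map (hX.prodMk hX').aemeasurable (by fun_prop)]
        rfl
    _ = 2 * ∫ x, (m x - integralUpdate j μ m x) ^ 2 ∂ν := integral_sub_update_sq hu hm
    _ = 2 * ∫ ω, (m (X ω) - integralUpdate j μ m (X ω)) ^ 2 ∂ℙ := by
        rw [integral_map hX.aemeasurable (by fun_prop)]
    _ = 2 * ∫ ω, (m (X ω) - (ℙ[fun ω' => m (X ω') | sigmaWithout X j]) ω) ^ 2 ∂ℙ := by
        refine congrArg _ (integral_congr_ae ?_)
        filter_upwards [condExp_sigmaWithout_ae_eq hX hu hmMeas.stronglyMeasurable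
          (hm.integrable one_le_two)] with ω hω
        rw [hω]
end
end

section
/- If the regression function is additive, m(X) = Σ_k m_k(X^{(k)}), then E[(m(X) - m(X_{π_j}))^2] = 2·Var(m_j(X^{(j)})). -/
open MeasureTheory ProbabilityTheory
open scoped ENNReal NNReal

noncomputable section

/-! Since `m` is additive, replacing `X^{(j)}` by `X'^{(j)}` changes `m(X)` by
`m_j(X^{(j)}) - m_j(X'^{(j)})`, a difference of two independent, identically distributed
square-integrable variables `A, B`. For those, `E[A - B] = 0`, so
`E[(A - B)²] = Var(A - B) = Var A + Var B = 2 Var A`. -/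

lemma sum_sub_sum_update_apply {ι α G : Type*} [Fintype ι] [DecidableEq ι] [AddCommGroup G]
    (f : ι → α → G) (x : ι → α) (j : ι) (y : α) :
    (∑ k, f k (x k)) - ∑ k, f k (Function.update x j y k) = f j (x j) - f j y := by
  rw [← Finset.sum_sub_distrib, Finset.sum_eq_single j]
  · simp
  · intro k _ hk
    simp [Function.update_of_ne hk]
  · simp

lemma integral_sq_sub_eq_two_mul_variance {Ω : Type*} [MeasurableSpace Ω] {μ : Measure Ω}
    [IsProbabilityMeasure μ] {A B : Ω → ℝ} (hA : MemLp A 2 μ) (hAB : IdentDistrib A B μ μ)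
    (hind : IndepFun A B μ) :
    ∫ ω, (A ω - B ω) ^ 2 ∂μ = 2 * Var[A; μ] := by
  have hB : MemLp B 2 μ := hAB.memLp_iff.mp hA
  have hmean : ∫ ω, A ω - B ω ∂μ = 0 := by
    rw [integral_sub (hA.integrable one_le_two) (hB.integrable one_le_two), hAB.integral_eq,
      sub_self]
  calc ∫ ω, (A ω - B ω) ^ 2 ∂μ = Var[A - B; μ] := by
        simp [variance_eq_integral (hA.sub hB).aemeasurable, hmean]
    _ = Var[A; μ] + Var[B; μ] := by
        rw [variance_sub hA hB, hind.covariance_eq_zero hA hB]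
        ring
    _ = 2 * Var[A; μ] := by
        rw [← hAB.variance_eq]
        ring

/-- If the regression function is additive, `m(x) = ∑ₖ mₖ(x⁽ᵏ⁾)`, then
`E[(m(X) - m(X_{π_j}))²] = 2 Var(m_j(X^{(j)}))`. -/
theorem mda_limit_additive
    {Ω : Type*} [MeasureSpace Ω] [IsProbabilityMeasure (ℙ : Measure Ω)]
    {p : ℕ} (j : Fin p) (X : Ω → Fin p → ℝ) (X' : Ω → ℝ)
    (mk : Fin p → ℝ → ℝ) (hmk : ∀ k, Measurable (mk k))
    (hL2 : ∀ k, MemLp (fun ω => mk k (X ω k)) 2 ℙ)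
    (hX : Measurable X) (hX' : Measurable X')
    -- `X'` is an independent copy of the `j`-th component of `X`
    (hcopy : Measure.map X' ℙ = Measure.map (fun ω => X ω j) ℙ)
    (hindep : IndepFun X' X ℙ) :
    ∫ ω, ((∑ k, mk k (X ω k)) - (∑ k, mk k (permuted X j X' ω k))) ^ 2 ∂ℙ
      = 2 * variance (fun ω => mk j (X ω j)) ℙ := by
  have hXj : Measurable fun ω => X ω j := (measurable_pi_apply j).comp hX
  have hident : IdentDistrib (fun ω => mk j (X ω j)) (fun ω => mk j (X' ω)) ℙ ℙ :=
    (IdentDistrib.mk hXj.aemeasurable hX'.aemeasurable hcopy.symm).comp (hmk j)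
  have hind : IndepFun (fun ω => mk j (X ω j)) (fun ω => mk j (X' ω)) ℙ :=
    (hindep.comp (hmk j) ((hmk j).comp (measurable_pi_apply j))).symm
  simp only [permuted, sum_sub_sum_update_apply]
  exact integral_sq_sub_eq_two_mul_variance (hL2 j) hident hind
end
end

section
/- Let Z be a binomial random variable with M trials and success probability q > 0. Then E[(1/Z)·1_{Z≥1}] ≤ 2/((M+1)q). -/
/-!
Since `(M + 1) * C(M, k) = (k + 1) * C(M + 1, k + 1) ≤ 2k * C(M + 1, k + 1)` for `k ≥ 1`, the `k`-th
term of the sum is at most `2 / ((M + 1) q)` times the probability that a `Binomial(M + 1, q)`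
variable equals `k + 1` (the value at `q` of the Bernstein polynomial `b_{M+1,k+1}`), and these
probabilities add up to at most `1`.
-/

open Finset Polynomial

lemma bernsteinPolynomial_eval_nonneg (n ν : ℕ) {q : ℝ} (hq : 0 ≤ q) (hq1 : q ≤ 1) :
    0 ≤ (bernsteinPolynomial ℝ n ν).eval q := by
  have : 0 ≤ 1 - q := by linarith
  simp only [bernsteinPolynomial, eval_mul, eval_natCast, eval_pow, eval_X, eval_sub, eval_one]
  positivity

lemma sum_bernsteinPolynomial_eval_le_one (n : ℕ) (s : Finset ℕ) {q : ℝ} (hq : 0 ≤ q)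
    (hq1 : q ≤ 1) : ∑ ν ∈ s, (bernsteinPolynomial ℝ n ν).eval q ≤ 1 := by
  have htotal : ∑ ν ∈ range (n + 1), (bernsteinPolynomial ℝ n ν).eval q = 1 := by
    simpa [eval_finsetSum] using congrArg (eval q) (bernsteinPolynomial.sum ℝ n)
  have hvanish : ∀ ν ∈ s ∪ range (n + 1), ν ∉ range (n + 1) →
      (bernsteinPolynomial ℝ n ν).eval q = 0 := by
    intro ν _ hν
    simp [bernsteinPolynomial, Nat.choose_eq_zero_of_lt (by simpa using hν : n < ν)]
  calc ∑ ν ∈ s, (bernsteinPolynomial ℝ n ν).eval q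
      ≤ ∑ ν ∈ s ∪ range (n + 1), (bernsteinPolynomial ℝ n ν).eval q :=
        sum_le_sum_of_subset_of_nonneg subset_union_left
          fun ν _ _ ↦ bernsteinPolynomial_eval_nonneg n ν hq hq1
    _ = 1 := by rw [← sum_subset subset_union_right hvanish, htotal]

lemma one_div_mul_choose_le (n : ℕ) {k : ℕ} (hk : 1 ≤ k) :
    1 / (k : ℝ) * n.choose k ≤ 2 / ((n : ℝ) + 1) * (n + 1).choose (k + 1) := by
  have hnat : (n + 1) * n.choose k ≤ 2 * k * (n + 1).choose (k + 1) := by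
    rw [Nat.add_one_mul_choose_eq, mul_comm]
    exact Nat.mul_le_mul_right _ (by omega)
  rw [one_div_mul_eq_div, div_mul_eq_mul_div, div_le_div_iff₀ (by positivity) (by positivity)]
  exact_mod_cast (by linarith : n.choose k * (n + 1) ≤ 2 * (n + 1).choose (k + 1) * k)

lemma one_div_mul_binomial_term_le (n : ℕ) {k : ℕ} (hk : 1 ≤ k) {q : ℝ} (hq : 0 < q)
    (hq1 : q ≤ 1) :
    1 / (k : ℝ) * n.choose k * q ^ k * (1 - q) ^ (n - k)
      ≤ 2 / (((n : ℝ) + 1) * q) * (bernsteinPolynomial ℝ (n + 1) (k + 1)).eval q := by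
  have hweight : 0 ≤ q ^ k * (1 - q) ^ (n - k) := by
    have : 0 ≤ 1 - q := by linarith
    positivity
  have hshift : n + 1 - (k + 1) = n - k := by omega
  simp only [bernsteinPolynomial, eval_mul, eval_natCast, eval_pow, eval_X, eval_sub, eval_one,
    hshift]
  calc 1 / (k : ℝ) * n.choose k * q ^ k * (1 - q) ^ (n - k)
      = (1 / (k : ℝ) * n.choose k) * (q ^ k * (1 - q) ^ (n - k)) := by ring
    _ ≤ (2 / ((n : ℝ) + 1) * (n + 1).choose (k + 1)) * (q ^ k * (1 - q) ^ (n - k)) :=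
        mul_le_mul_of_nonneg_right (one_div_mul_choose_le n hk) hweight
    _ = _ := by field_simp; ring

theorem binomial_inverse_moment_bound_general (M : ℕ) (q : ℝ) (hq : 0 < q) (hq1 : q ≤ 1) :
    ∑ k ∈ Finset.Icc 1 M, (1 / (k : ℝ)) * (M.choose k) * q ^ k * (1 - q) ^ (M - k)
      ≤ 2 / (((M : ℝ) + 1) * q) := by
  have hshifted : ∑ k ∈ Icc 1 M, (bernsteinPolynomial ℝ (M + 1) (k + 1)).eval q ≤ 1 := by
    simpa only [sum_map, addRightEmbedding_apply] using
      sum_bernsteinPolynomial_eval_le_one (M + 1) ((Icc 1 M).map (addRightEmbedding 1)) hq.le hq1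
  calc ∑ k ∈ Icc 1 M, 1 / (k : ℝ) * M.choose k * q ^ k * (1 - q) ^ (M - k)
      ≤ ∑ k ∈ Icc 1 M, 2 / (((M : ℝ) + 1) * q) * (bernsteinPolynomial ℝ (M + 1) (k + 1)).eval q :=
        sum_le_sum fun k hk ↦ one_div_mul_binomial_term_le M (mem_Icc.mp hk).1 hq hq1
    _ = 2 / (((M : ℝ) + 1) * q) * ∑ k ∈ Icc 1 M, (bernsteinPolynomial ℝ (M + 1) (k + 1)).eval q :=
        (mul_sum _ _ _).symm
    _ ≤ 2 / (((M : ℝ) + 1) * q) := mul_le_of_le_one_right (by positivity) hshifted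

/-- For `Z ~ Binomial(M, q)` with `M ≥ 1` and `0 < q ≤ 1`,
`E[(1/Z)·1_{Z ≥ 1}] ≤ 2/((M+1)q)`. The expectation is written out as the binomial sum. -/
theorem binomial_inverse_moment_bound (M : ℕ) (hM : 1 ≤ M) (q : ℝ) (hq : 0 < q) (hq1 : q ≤ 1) :
    ∑ k ∈ Finset.Icc 1 M, (1 / (k : ℝ)) * (M.choose k) * q ^ k * (1 - q) ^ (M - k)
      ≤ 2 / (((M : ℝ) + 1) * q) :=
  binomial_inverse_moment_bound_general M q hq hq1
end

section
/- Fix an integer M ≥ 2 and q ∈ (0,1). Define δ = M^2 · q^2 · Σ_{k=0}^{M-2} (1/(k+2)^2) · C(M-2, k) q^k (1-q)^{M-2-k}. Then δ = (M/(M-1)) · Σ_{k=2}^{M} ((k-1)/k) · C(M, k) q^k (1-q)^{M-k}, and δ ≤ 1 - (1-q)^M ≤ 1. -/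
/-!
Write `P(M, k) = C(M,k) qᵏ (1-q)^{M-k}` for the binomial probabilities. The factorial-moment
identity `(k+2)(k+1) P(M, k+2) = M(M-1) q² P(M-2, k)` turns each term of `δ` into
`M/(M-1) · ((k+1)/(k+2)) · P(M, k+2)`, which is the identity. Since `M(k-1) ≤ k(M-1)` for `k ≤ M`,
every coefficient `M/(M-1) · (k-1)/k` is at most `1`, so
`δ ≤ ∑_{k ≥ 2} P(M, k) ≤ ∑_{k ≥ 1} P(M, k) = 1 - (1-q)^M`.
-/

open Finset

noncomputable def binomialProb (M k : ℕ) (q : ℝ) : ℝ :=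
  M.choose k * q ^ k * (1 - q) ^ (M - k)

lemma binomialProb_nonneg {q : ℝ} (hq₀ : 0 ≤ q) (hq₁ : q ≤ 1) (M k : ℕ) :
    0 ≤ binomialProb M k q := by
  unfold binomialProb
  have : 0 ≤ 1 - q := by linarith
  positivity

lemma sum_binomialProb_range (M : ℕ) (q : ℝ) :
    ∑ k ∈ range (M + 1), binomialProb M k q = 1 := by
  rw [← one_pow (M := ℝ) M, ← add_sub_cancel q (1 : ℝ), add_pow]
  exact sum_congr rfl fun k _ => by rw [binomialProb]; ring

lemma sum_binomialProb_Icc_one (M : ℕ) (q : ℝ) :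
    ∑ k ∈ Icc 1 M, binomialProb M k q = 1 - (1 - q) ^ M := by
  have h := sum_binomialProb_range M q
  rw [range_eq_Ico, sum_eq_sum_Ico_succ_bot M.succ_pos, zero_add, Nat.succ_eq_add_one,
    Ico_add_one_right_eq_Icc] at h
  simp only [binomialProb, Nat.choose_zero_right, pow_zero, Nat.sub_zero, Nat.cast_one,
    one_mul] at h ⊢
  linarith

lemma binomialProb_add_two (M k : ℕ) (q : ℝ) :
    ((k : ℝ) + 2) * ((k : ℝ) + 1) * binomialProb M (k + 2) q
      = M * ((M : ℝ) - 1) * q ^ 2 * binomialProb (M - 2) k q := by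
  have hchoose : (M.choose (k + 2) : ℝ) * ((k + 2).choose 2) = M.choose 2 * (M - 2).choose k := by
    exact_mod_cast Nat.choose_mul (n := M) (by omega : 2 ≤ k + 2)
  simp only [Nat.cast_choose_two, Nat.cast_add, Nat.cast_ofNat] at hchoose
  rw [binomialProb, binomialProb, Nat.sub_sub, add_comm 2 k, pow_add]
  linear_combination 2 * q ^ k * q ^ 2 * (1 - q) ^ (M - (k + 2)) * hchoose

lemma sq_mul_sum_binomialProb_div_sq (M : ℕ) (q : ℝ) :
    (M : ℝ) ^ 2 * q ^ 2 * ∑ k ∈ range (M - 1), 1 / ((k : ℝ) + 2) ^ 2 * binomialProb (M - 2) k q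
      = M / ((M : ℝ) - 1) * ∑ k ∈ Icc 2 M, ((k : ℝ) - 1) / k * binomialProb M k q := by
  rw [← Ico_add_one_right_eq_Icc, sum_Ico_eq_sum_range, show M + 1 - 2 = M - 1 by omega,
    mul_sum, mul_sum]
  refine sum_congr rfl fun k hk => ?_
  have hM : (k : ℝ) + 2 ≤ M := by
    rw [mem_range] at hk
    exact_mod_cast (by omega : k + 2 ≤ M)
  have hM₁ : (M : ℝ) - 1 ≠ 0 := by linarith
  have h := binomialProb_add_two M k q
  rw [add_comm 2 k]
  push_cast
  field_simp
  linear_combination -(M : ℝ) * h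

lemma div_sub_one_mul_sub_one_div_le_one {x y : ℝ} (hx : 1 < x) (hy : 0 < y) (hyx : y ≤ x) :
    x / (x - 1) * ((y - 1) / y) ≤ 1 := by
  rw [div_mul_div_comm, div_le_one (by nlinarith)]
  nlinarith

theorem binomial_delta_identity_and_bound_general (M : ℕ) (q : ℝ)
    (hq : q ∈ Set.Ioo (0 : ℝ) 1) (δ : ℝ)
    (hδ : δ = (M : ℝ) ^ 2 * q ^ 2 *
        ∑ k ∈ Finset.range (M - 1),
          (1 / ((k : ℝ) + 2) ^ 2) * ((M - 2).choose k) * q ^ k * (1 - q) ^ (M - 2 - k)) :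
    δ = ((M : ℝ) / ((M : ℝ) - 1)) *
        ∑ k ∈ Finset.Icc 2 M, (((k : ℝ) - 1) / (k : ℝ)) * (M.choose k) * q ^ k * (1 - q) ^ (M - k)
      ∧ δ ≤ 1 - (1 - q) ^ M ∧ 1 - (1 - q) ^ M ≤ 1 := by
  obtain ⟨hq₀, hq₁⟩ := hq
  have hP : ∀ k, 0 ≤ binomialProb M k q := binomialProb_nonneg hq₀.le hq₁.le M
  have hδ' : δ = M / ((M : ℝ) - 1) * ∑ k ∈ Icc 2 M, ((k : ℝ) - 1) / k * binomialProb M k q := by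
    rw [hδ, ← sq_mul_sum_binomialProb_div_sq]
    simp only [binomialProb, mul_assoc]
  have hle : δ ≤ ∑ k ∈ Icc 2 M, binomialProb M k q := by
    rw [hδ', mul_sum]
    refine sum_le_sum fun k hk => ?_
    obtain ⟨h2k, hkM⟩ := mem_Icc.mp hk
    rw [← mul_assoc]
    refine mul_le_of_le_one_left (hP k) (div_sub_one_mul_sub_one_div_le_one ?_ ?_ ?_)
    all_goals exact_mod_cast (by omega)
  have hsub : ∑ k ∈ Icc 2 M, binomialProb M k q ≤ ∑ k ∈ Icc 1 M, binomialProb M k q :=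
    sum_le_sum_of_subset_of_nonneg (Icc_subset_Icc_left one_le_two) fun k _ _ => hP k
  refine ⟨hδ'.trans (by simp only [binomialProb, mul_assoc]), ?_, ?_⟩
  · rw [← sum_binomialProb_Icc_one]
    exact hle.trans hsub
  · linarith [pow_nonneg (sub_nonneg.mpr hq₁.le) M]

/-- For `M ≥ 2` and `q ∈ (0,1)`, the quantity
`δ = M² q² ∑_{k=0}^{M-2} (1/(k+2)²) C(M-2,k) qᵏ (1-q)^{M-2-k}`
satisfies `δ = (M/(M-1)) ∑_{k=2}^{M} ((k-1)/k) C(M,k) qᵏ (1-q)^{M-k}` and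
`δ ≤ 1 - (1-q)^M ≤ 1`. -/
theorem binomial_delta_identity_and_bound (M : ℕ) (hM : 2 ≤ M) (q : ℝ)
    (hq : q ∈ Set.Ioo (0 : ℝ) 1) (δ : ℝ)
    (hδ : δ = (M : ℝ) ^ 2 * q ^ 2 *
        ∑ k ∈ Finset.range (M - 1),
          (1 / ((k : ℝ) + 2) ^ 2) * ((M - 2).choose k) * q ^ k * (1 - q) ^ (M - 2 - k)) :
    δ = ((M : ℝ) / ((M : ℝ) - 1)) *
        ∑ k ∈ Finset.Icc 2 M, (((k : ℝ) - 1) / (k : ℝ)) * (M.choose k) * q ^ k * (1 - q) ^ (M - k)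
      ∧ δ ≤ 1 - (1 - q) ^ M ∧ 1 - (1 - q) ^ M ≤ 1 :=
  binomial_delta_identity_and_bound_general M q hq δ hδ
end

section
/- Fix q ∈ (0,1) and let δ_M = (M/(M-1)) · Σ_{k=2}^{M} ((k-1)/k)·C(M,k) q^k (1-q)^{M-k} for M ≥ 2. Then the sequence M(1 - δ_M) is bounded; in particular 0 ≤ M(1 - δ_M) ≤ (M/(M-1))·[M(1-q)^M + 2M/((M+1)q)] - M/(M-1) + M, and hence 1 - δ_M = O(1/M) as M → ∞. -/
/-!
With `Z ~ Binomial(M, q)`, writing `(k-1)/k = 1 - 1/k` turns the sum into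
`δ_M = (M/(M-1)) (1 - P(Z = 0) - 𝔼[Z⁻¹ 1_{Z ≥ 1}])`, hence
`M (1 - δ_M) = (M/(M-1)) (M (1-q)^M + M 𝔼[Z⁻¹ 1_{Z ≥ 1}] - 1)`.
Since `Z⁻¹ ≥ M⁻¹` on `Z ≥ 1`, the bracket is at least `M (1-q)^M + 1 - (1-q)^M ≥ 1`.
Since `1/k ≤ 2/(k+1)` and `C(M,k)/(k+1) = C(M+1,k+1)/(M+1)`, the expectation is at most
`2/((M+1)q)` times a tail of the `Binomial(M+1, q)` distribution; and `M (1-q)^M ≤ 1/q` because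
`P(Z = 1) = M q (1-q)^(M-1) ≤ 1`. With `M/(M-1) ≤ 2` this gives `0 ≤ M (1 - δ_M) ≤ 6/q`.
-/

open Finset

noncomputable def binomWeight (n : ℕ) (q : ℝ) (k : ℕ) : ℝ :=
  n.choose k * q ^ k * (1 - q) ^ (n - k)

/-- `𝔼[Z⁻¹ 1_{Z ≥ 1}]` for `Z ~ Binomial(n, q)`. -/
noncomputable def binomInvMean (n : ℕ) (q : ℝ) : ℝ :=
  ∑ k ∈ Icc 1 n, binomWeight n q k / k

noncomputable def binomDelta (n : ℕ) (q : ℝ) : ℝ :=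
  n / (n - 1 : ℝ) * (1 - (1 - q) ^ n - binomInvMean n q)

section BinomWeight

variable {n : ℕ} {q : ℝ}

theorem binomWeight_nonneg (hq0 : 0 ≤ q) (hq1 : q ≤ 1) (k : ℕ) : 0 ≤ binomWeight n q k := by
  have : 0 ≤ 1 - q := sub_nonneg.2 hq1
  unfold binomWeight; positivity

@[simp]
theorem binomWeight_zero : binomWeight n q 0 = (1 - q) ^ n := by
  simp [binomWeight]

theorem binomWeight_one : binomWeight n q 1 = n * q * (1 - q) ^ (n - 1) := by
  simp [binomWeight]

theorem sum_range_binomWeight (n : ℕ) (q : ℝ) : ∑ k ∈ range (n + 1), binomWeight n q k = 1 := by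
  have h := add_pow q (1 - q) n
  rw [add_sub_cancel, one_pow] at h
  rw [h]
  exact sum_congr rfl fun k _ => by unfold binomWeight; ring

theorem sum_Icc_one_binomWeight (n : ℕ) (q : ℝ) :
    ∑ k ∈ Icc 1 n, binomWeight n q k = 1 - (1 - q) ^ n := by
  have h := sum_range_binomWeight n q
  rw [range_eq_Ico, sum_eq_sum_Ico_succ_bot (Nat.succ_pos n), zero_add, Nat.succ_eq_add_one,
    Ico_add_one_right_eq_Icc, binomWeight_zero] at h
  linarith

theorem binomWeight_le_one (hq0 : 0 ≤ q) (hq1 : q ≤ 1) {k : ℕ} (hk : k ≤ n) :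
    binomWeight n q k ≤ 1 :=
  sum_range_binomWeight n q ▸
    single_le_sum (fun j _ => binomWeight_nonneg hq0 hq1 j) (mem_range.2 (Nat.lt_succ_of_le hk))

theorem natCast_mul_one_sub_pow_le (hq0 : 0 < q) (hq1 : q ≤ 1) :
    n * (1 - q) ^ n ≤ 1 / q := by
  rcases Nat.eq_zero_or_pos n with rfl | hn
  · simp [hq0.le]
  have hpow : (1 - q) ^ n ≤ (1 - q) ^ (n - 1) :=
    pow_le_pow_of_le_one (by linarith) (by linarith) (Nat.sub_le n 1)
  have hterm := binomWeight_le_one (n := n) hq0.le hq1 hn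
  rw [binomWeight_one] at hterm
  rw [le_div_iff₀ hq0]
  nlinarith [mul_le_mul_of_nonneg_left hpow (by positivity : (0 : ℝ) ≤ n * q)]

theorem binomWeight_div_le (hq0 : 0 < q) (hq1 : q ≤ 1) {k : ℕ} (hk : 1 ≤ k) :
    binomWeight n q k / k ≤ 2 / ((n + 1) * q) * binomWeight (n + 1) q (k + 1) := by
  have hchoose : ((n + 1).choose (k + 1) : ℝ) = (n + 1) * n.choose k / (k + 1) := by
    rw [eq_div_iff (by positivity)]
    exact_mod_cast (Nat.add_one_mul_choose_eq n k).symm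
  have hshift : 2 / ((n + 1) * q) * binomWeight (n + 1) q (k + 1)
      = 2 / (k + 1) * binomWeight n q k := by
    rw [binomWeight, binomWeight, hchoose, Nat.add_sub_add_right, pow_succ]
    field_simp
  have hk' : (1 : ℝ) ≤ k := by exact_mod_cast hk
  rw [hshift, div_eq_inv_mul]
  refine mul_le_mul_of_nonneg_right ?_ (binomWeight_nonneg hq0.le hq1 k)
  rw [inv_eq_one_div, div_le_div_iff₀ (by positivity) (by positivity)]
  linarith

end BinomWeight

section BinomInvMean

variable {n : ℕ} {q : ℝ}

theorem one_sub_one_sub_pow_le_mul_binomInvMean (hq0 : 0 ≤ q) (hq1 : q ≤ 1) :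
    1 - (1 - q) ^ n ≤ n * binomInvMean n q := by
  rcases Nat.eq_zero_or_pos n with rfl | hn
  · simp
  rw [← sum_Icc_one_binomWeight, binomInvMean, mul_sum]
  refine sum_le_sum fun k hk => ?_
  obtain ⟨hk1, hkn⟩ := mem_Icc.1 hk
  have hk0 : (0 : ℝ) < k := by exact_mod_cast hk1
  rw [mul_div_assoc', le_div_iff₀ hk0, mul_comm]
  exact mul_le_mul_of_nonneg_right (Nat.cast_le.2 hkn) (binomWeight_nonneg hq0 hq1 k)

theorem binomInvMean_le (hq0 : 0 < q) (hq1 : q ≤ 1) :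
    binomInvMean n q ≤ 2 / ((n + 1) * q) := by
  have hshift : ∑ k ∈ Icc 1 n, binomWeight (n + 1) q (k + 1) ≤ 1 := by
    have htotal := sum_range_binomWeight (n + 1) q
    rw [sum_range_succ'] at htotal
    have hsub : ∑ k ∈ Icc 1 n, binomWeight (n + 1) q (k + 1)
        ≤ ∑ k ∈ range (n + 1), binomWeight (n + 1) q (k + 1) :=
      sum_le_sum_of_subset_of_nonneg (fun k hk => mem_range.2 (by simp only [mem_Icc] at hk; omega))
        fun k _ _ => binomWeight_nonneg hq0.le hq1 (k + 1)
    linarith [binomWeight_nonneg (n := n + 1) hq0.le hq1 0]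
  calc binomInvMean n q
      ≤ ∑ k ∈ Icc 1 n, 2 / ((n + 1) * q) * binomWeight (n + 1) q (k + 1) :=
        sum_le_sum fun k hk => binomWeight_div_le hq0 hq1 (mem_Icc.1 hk).1
    _ = 2 / ((n + 1) * q) * ∑ k ∈ Icc 1 n, binomWeight (n + 1) q (k + 1) := by rw [mul_sum]
    _ ≤ 2 / ((n + 1) * q) := mul_le_of_le_one_right (by positivity) hshift

theorem one_le_mul_one_sub_pow_add_mul_binomInvMean (hq0 : 0 ≤ q) (hq1 : q ≤ 1) (hn : 1 ≤ n) :
    1 ≤ n * (1 - q) ^ n + n * binomInvMean n q := by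
  have hn' : (1 : ℝ) ≤ n := by exact_mod_cast hn
  have ht : 0 ≤ (1 - q) ^ n := pow_nonneg (by linarith) n
  nlinarith [one_sub_one_sub_pow_le_mul_binomInvMean (n := n) hq0 hq1]

end BinomInvMean

section BinomDelta

variable {n : ℕ} {q : ℝ}

theorem sum_Icc_two_sub_one_div_mul_binomWeight (n : ℕ) (q : ℝ) :
    ∑ k ∈ Icc 2 n, ((k : ℝ) - 1) / k * n.choose k * q ^ k * (1 - q) ^ (n - k)
      = 1 - (1 - q) ^ n - binomInvMean n q := by
  have hsplit : ∀ k ∈ Icc 1 n, ((k : ℝ) - 1) / k * binomWeight n q k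
      = binomWeight n q k - binomWeight n q k / k := by
    intro k hk
    have : (k : ℝ) ≠ 0 := by exact_mod_cast (Nat.one_le_iff_ne_zero.1 (mem_Icc.1 hk).1)
    field_simp
  rw [← sum_Icc_one_binomWeight, binomInvMean, ← sum_sub_distrib, ← sum_congr rfl hsplit,
    ← sum_subset (Icc_subset_Icc_left one_le_two)]
  · exact sum_congr rfl fun k _ => by unfold binomWeight; ring
  · intro k hk hk2
    obtain rfl : k = 1 := by simp only [mem_Icc] at hk hk2; omega
    simp

theorem natCast_mul_one_sub_binomDelta (hn : 2 ≤ n) :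
    n * (1 - binomDelta n q) = n / (n - 1 : ℝ) * (n * (1 - q) ^ n + n * binomInvMean n q - 1) := by
  have : (n - 1 : ℝ) ≠ 0 := by
    have : (2 : ℝ) ≤ n := by exact_mod_cast hn
    linarith
  unfold binomDelta
  field_simp
  ring

theorem natCast_mul_one_sub_binomDelta_nonneg (hq0 : 0 ≤ q) (hq1 : q ≤ 1) (hn : 2 ≤ n) :
    0 ≤ n * (1 - binomDelta n q) := by
  have hn' : (2 : ℝ) ≤ n := by exact_mod_cast hn
  rw [natCast_mul_one_sub_binomDelta hn]
  exact mul_nonneg (div_nonneg (by linarith) (by linarith))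
    (sub_nonneg.2 (one_le_mul_one_sub_pow_add_mul_binomInvMean hq0 hq1 (by omega)))

theorem natCast_mul_one_sub_binomDelta_le (hq0 : 0 < q) (hq1 : q ≤ 1) (hn : 2 ≤ n) :
    n * (1 - binomDelta n q)
      ≤ n / (n - 1 : ℝ) * (n * (1 - q) ^ n + 2 * n / ((n + 1) * q)) - n / (n - 1 : ℝ) := by
  have hn' : (2 : ℝ) ≤ n := by exact_mod_cast hn
  have hE : n * binomInvMean n q ≤ 2 * n / ((n + 1) * q) :=
    (mul_le_mul_of_nonneg_left (binomInvMean_le hq0 hq1) n.cast_nonneg).trans_eq (by ring)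
  rw [natCast_mul_one_sub_binomDelta hn, mul_sub_one]
  gcongr ?_ - _
  exact mul_le_mul_of_nonneg_left (by linarith) (div_nonneg (by linarith) (by linarith))

theorem natCast_mul_one_sub_binomDelta_le_six_div (hq0 : 0 < q) (hq1 : q ≤ 1) (hn : 2 ≤ n) :
    n * (1 - binomDelta n q) ≤ 6 / q := by
  have hn' : (2 : ℝ) ≤ n := by exact_mod_cast hn
  have hfactor : n / (n - 1 : ℝ) ≤ 2 := by rw [div_le_iff₀ (by linarith)]; linarith
  have hE : n * binomInvMean n q ≤ 2 / q := by
    calc n * binomInvMean n q ≤ n * (2 / ((n + 1) * q)) :=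
          mul_le_mul_of_nonneg_left (binomInvMean_le hq0 hq1) n.cast_nonneg
      _ ≤ 2 / q := by
          rw [mul_div_assoc', div_le_div_iff₀ (by positivity) hq0]
          nlinarith
  have ht := natCast_mul_one_sub_pow_le (n := n) hq0 hq1
  have hsum : 0 ≤ n * (1 - q) ^ n + n * binomInvMean n q - 1 :=
    sub_nonneg.2 (one_le_mul_one_sub_pow_add_mul_binomInvMean hq0.le hq1 (by omega))
  rw [natCast_mul_one_sub_binomDelta hn]
  calc _ ≤ 2 * (n * (1 - q) ^ n + n * binomInvMean n q - 1) :=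
        mul_le_mul_of_nonneg_right hfactor hsum
    _ ≤ 2 * (1 / q + 2 / q) := by linarith
    _ = 6 / q := by ring

end BinomDelta

/-- For fixed `q ∈ (0,1)` and
`δ_M = (M/(M-1)) ∑_{k=2}^{M} ((k-1)/k) C(M,k) qᵏ (1-q)^{M-k}` (`M ≥ 2`),
the sequence `M(1 - δ_M)` is bounded; in particular
`0 ≤ M(1 - δ_M) ≤ (M/(M-1))·(M(1-q)^M + 2M/((M+1)q)) - M/(M-1) + M`,
and hence `1 - δ_M = O(1/M)` as `M → ∞`. -/
theorem binomial_delta_one_sub_bigO (q : ℝ) (hq : q ∈ Set.Ioo (0 : ℝ) 1) (δ : ℕ → ℝ)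
    (hδ : ∀ M, 2 ≤ M → δ M = ((M : ℝ) / ((M : ℝ) - 1)) *
        ∑ k ∈ Finset.Icc 2 M,
          (((k : ℝ) - 1) / (k : ℝ)) * (M.choose k) * q ^ k * (1 - q) ^ (M - k)) :
    (∃ C : ℝ, ∀ M : ℕ, 2 ≤ M → |(M : ℝ) * (1 - δ M)| ≤ C) ∧
    (∀ M : ℕ, 2 ≤ M →
      0 ≤ (M : ℝ) * (1 - δ M) ∧
      (M : ℝ) * (1 - δ M) ≤
        ((M : ℝ) / ((M : ℝ) - 1)) * ((M : ℝ) * (1 - q) ^ M + 2 * (M : ℝ) / (((M : ℝ) + 1) * q))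
          - (M : ℝ) / ((M : ℝ) - 1) + (M : ℝ)) ∧
    (∃ C : ℝ, ∀ M : ℕ, 2 ≤ M → |1 - δ M| ≤ C / (M : ℝ)) := by
  obtain ⟨hq0, hq1⟩ := hq
  have hδ_eq : ∀ M, 2 ≤ M → δ M = binomDelta M q := fun M hM => by
    rw [hδ M hM, sum_Icc_two_sub_one_div_mul_binomWeight, binomDelta]
  have nonneg M (hM : 2 ≤ M) := natCast_mul_one_sub_binomDelta_nonneg hq0.le hq1.le hM
  have bound M (hM : 2 ≤ M) := natCast_mul_one_sub_binomDelta_le_six_div hq0 hq1.le hM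
  refine ⟨⟨6 / q, fun M hM => ?_⟩, fun M hM => ⟨?_, ?_⟩, ⟨6 / q, fun M hM => ?_⟩⟩
  · rw [hδ_eq M hM, abs_of_nonneg (nonneg M hM)]
    exact bound M hM
  · exact hδ_eq M hM ▸ nonneg M hM
  · rw [hδ_eq M hM]
    linarith [natCast_mul_one_sub_binomDelta_le hq0 hq1.le hM, M.cast_nonneg (α := ℝ)]
  · have hMpos : (0 : ℝ) < M := by exact_mod_cast (by omega : 0 < M)
    have hprod := nonneg M hM
    rw [le_div_iff₀ hMpos, hδ_eq M hM, abs_of_nonneg (nonneg_of_mul_nonneg_right hprod hMpos)]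
    linarith [bound M hM]
end

section
/- Let m_1,...,m_M be i.i.d. square-integrable random variables conditionally on a sigma-algebra G (representing tree estimates given the data and the query point), and let T be a G-measurable square-integrable random variable (the target m(X)). Then E[((1/M)Σ_ℓ m_ℓ - T)^2] = (1/M) E[(m_1 - T)^2] + (1 - 1/M) E[(E[m_1|G] - T)^2]. In particular, (1/M)E[(m_1 - T)^2] ≤ E[((1/M)Σ_ℓ m_ℓ - T)^2]. -/
open MeasureTheory ProbabilityTheory

open Set
open scoped ENNReal

section Aux
variable {Ω : Type*}

lemma my_int_mul {mΩ : MeasurableSpace Ω} {μ : Measure Ω} {f g : Ω → ℝ}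
    (hf : MemLp f 2 μ) (hg : MemLp g 2 μ) :
    Integrable (fun ω => f ω * g ω) μ := by
  have hpqr : (1:ℝ≥0∞)/1 = 1/2 + 1/2 := by
    rw [one_div_one]; exact (ENNReal.add_halves 1).symm
  exact memLp_one_iff_integrable.mp (hg.smul hf)

lemma my_memℒp_condexp {mΩ : MeasurableSpace Ω} (μ : Measure Ω) [IsProbabilityMeasure μ]
    (G : MeasurableSpace Ω) (hG : G ≤ mΩ) {f : Ω → ℝ} (hf : MemLp f 2 μ) :
    MemLp (μ[f|G]) 2 μ := by
  letI : MeasurableSpace Ω := mΩ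
  have hint : Integrable f μ := hf.integrable one_le_two
  have hg2 : MemLp (condExpL2 ℝ ℝ hG (hf.toLp f) : Ω → ℝ) 2 μ := Lp.memLp _
  have heq : (condExpL2 ℝ ℝ hG (hf.toLp f) : Ω → ℝ) =ᵐ[μ] μ[f|G] := by
    refine ae_eq_condExp_of_forall_setIntegral_eq hG hint ?_ ?_
      (aestronglyMeasurable_condExpL2 hG _)
    · intro s hs hμs
      exact (hg2.integrable one_le_two).integrableOn
    · intro s hs hμs
      rw [integral_condExpL2_eq hG (hf.toLp f) hs hμs.ne]
      exact setIntegral_congr_ae (hG s hs) ((hf.coeFn_toLp).mono fun x hx _ => hx)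
  exact hg2.ae_eq heq

lemma my_ae_indepFun {mΩ : MeasurableSpace Ω} [StandardBorelSpace Ω] [Nonempty Ω]
    (μ : Measure Ω) [IsProbabilityMeasure μ]
    (G : MeasurableSpace Ω) (hG : G ≤ mΩ) {f g : Ω → ℝ}
    (hf : Measurable[mΩ] f) (hg : Measurable[mΩ] g)
    (h : CondIndepFun G hG f g μ) :
    ∀ᵐ ω ∂μ, IndepFun (_mΩ := mΩ) f g (condExpKernel (mΩ := mΩ) μ G ω) := by
  letI : MeasurableSpace Ω := mΩ
  have hQQ : ∀ᵐ ω ∂μ, ∀ q r : ℚ,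
      condExpKernel μ G ω (f ⁻¹' Iic (q:ℝ) ∩ g ⁻¹' Iic (r:ℝ))
        = condExpKernel μ G ω (f ⁻¹' Iic (q:ℝ)) * condExpKernel μ G ω (g ⁻¹' Iic (r:ℝ)) := by
    rw [ae_all_iff]
    intro q
    rw [ae_all_iff]
    intro r
    have h1 := h (f ⁻¹' Iic (q:ℝ)) (g ⁻¹' Iic (r:ℝ))
      ⟨Iic (q:ℝ), measurableSet_Iic, rfl⟩ ⟨Iic (r:ℝ), measurableSet_Iic, rfl⟩
    exact ae_eq_of_ae_eq_trim h1
  filter_upwards [hQQ] with ω hω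
  haveI : IsProbabilityMeasure (condExpKernel μ G ω) := inferInstance
  set ν := condExpKernel μ G ω with hν
  let S : Set (Set ℝ) := ⋃ a : ℚ, {Iic (a:ℝ)}
  have hSgen : (inferInstance : MeasurableSpace ℝ) = MeasurableSpace.generateFrom S :=
    Real.borel_eq_generateFrom_Iic_rat
  have hcomap : ∀ (φ : Ω → ℝ), MeasurableSpace.comap φ (inferInstance : MeasurableSpace ℝ)
      = MeasurableSpace.generateFrom ((φ ⁻¹' ·) '' S) := by
    intro φ
    rw [hSgen, MeasurableSpace.comap_generateFrom]
  have hindep : Indep (MeasurableSpace.comap f inferInstance)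
      (MeasurableSpace.comap g inferInstance) ν := by
    refine IndepSets.indep (hf.comap_le) (hg.comap_le)
      (Real.isPiSystem_Iic_rat.comap f) (Real.isPiSystem_Iic_rat.comap g)
      ?_ ?_ ?_
    · rw [hcomap f]; rfl
    · rw [hcomap g]; rfl
    · rintro t1 t2 ⟨s1, hs1, rfl⟩ ⟨s2, hs2, rfl⟩
      simp only [S, mem_iUnion, mem_singleton_iff] at hs1 hs2
      obtain ⟨q, rfl⟩ := hs1
      obtain ⟨r, rfl⟩ := hs2
      refine ae_of_all _ fun _ => ?_
      simpa [Kernel.const_apply] using hω q r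
  exact hindep

lemma my_integral_mul_condexp {mΩ : MeasurableSpace Ω} [StandardBorelSpace Ω] [Nonempty Ω]
    (μ : Measure Ω) [IsProbabilityMeasure μ]
    (G : MeasurableSpace Ω) (hG : G ≤ mΩ) {f g : Ω → ℝ}
    (hf : Measurable[mΩ] f) (hg : Measurable[mΩ] g)
    (hf2 : MemLp f 2 μ) (hg2 : MemLp g 2 μ)
    (h : CondIndepFun G hG f g μ) :
    ∫ ω, f ω * g ω ∂μ = ∫ ω, (μ[f|G]) ω * (μ[g|G]) ω ∂μ := by
  letI : MeasurableSpace Ω := mΩ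
  have hfg_int : Integrable (fun ω => f ω * g ω) μ := my_int_mul hf2 hg2
  rw [← integral_condExp hG (μ := μ) (f := fun ω => f ω * g ω)]
  refine integral_congr_ae ?_
  have h1 := condExp_ae_eq_integral_condExpKernel hG hfg_int
  have h2 := condExp_ae_eq_integral_condExpKernel hG (hf2.integrable one_le_two)
  have h3 := condExp_ae_eq_integral_condExpKernel hG (hg2.integrable one_le_two)
  have h4 := my_ae_indepFun μ G hG hf hg h
  filter_upwards [h1, h2, h3, h4] with ω e1 e2 e3 e4
  rw [e1, e2, e3]
  exact IndepFun.integral_fun_mul_eq_mul_integral e4 hf.aestronglyMeasurable hg.aestronglyMeasurable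

lemma my_expand {mΩ : MeasurableSpace Ω} (μ : Measure Ω) [IsProbabilityMeasure μ]
    {x y : Ω → ℝ} (hx : MemLp x 2 μ) (hy : MemLp y 2 μ) :
    ∫ ω, (x ω - y ω)^2 ∂μ
      = ∫ ω, x ω * x ω ∂μ - 2 * ∫ ω, x ω * y ω ∂μ + ∫ ω, y ω * y ω ∂μ := by
  have hxx := my_int_mul hx hx
  have hxy := my_int_mul hx hy
  have hyy := my_int_mul hy hy
  have hrw : (fun ω => (x ω - y ω)^2)
      = fun ω => (x ω * x ω - 2 * (x ω * y ω)) + y ω * y ω := funext fun ω => by ring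
  have h1 : ∫ ω, ((x ω * x ω - 2 * (x ω * y ω)) + y ω * y ω) ∂μ
      = ∫ ω, (x ω * x ω - 2 * (x ω * y ω)) ∂μ + ∫ ω, y ω * y ω ∂μ :=
    integral_add (hxx.sub (hxy.const_mul 2)) hyy
  have h2 : ∫ ω, (x ω * x ω - 2 * (x ω * y ω)) ∂μ
      = ∫ ω, x ω * x ω ∂μ - ∫ ω, 2 * (x ω * y ω) ∂μ := integral_sub hxx (hxy.const_mul 2)
  have h3 : ∫ ω, 2 * (x ω * y ω) ∂μ = 2 * ∫ ω, x ω * y ω ∂μ := integral_const_mul 2 _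
  rw [hrw, h1, h2, h3]

end Aux

/-- Finite-forest risk decomposition: if the tree estimates `m₀, ..., m_{M-1}` are
i.i.d. conditionally on the σ-algebra `G` (conditional independence plus identical
conditional distributions), and `T` is a `G`-measurable square-integrable target, then
`E[((1/M)∑ mₗ - T)²] = (1/M) E[(m₀ - T)²] + (1 - 1/M) E[(E[m₀|G] - T)²]`;
in particular `(1/M) E[(m₀ - T)²] ≤ E[((1/M)∑ mₗ - T)²]`. -/
theorem forest_risk_decomposition
    {Ω : Type*} (G : MeasurableSpace Ω) [mΩ : MeasurableSpace Ω] [StandardBorelSpace Ω] [Nonempty Ω]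
    (μ : Measure Ω) [IsProbabilityMeasure μ]
    (M : ℕ) (hM : 1 ≤ M) (m : Fin M → Ω → ℝ)
    (hG : G ≤ mΩ)
    (T : Ω → ℝ) (hTmeas : Measurable[G] T) (hTL2 : MemLp T 2 μ)
    (hmMeas : ∀ ℓ, Measurable (m ℓ)) (hmL2 : ∀ ℓ, MemLp (m ℓ) 2 μ)
    -- conditional independence of the tree estimates given `G`
    (hCondIndep : iCondIndepFun G hG m μ)
    -- identical conditional distributions given `G`
    (hIdent : ∀ (ℓ : Fin M) (φ : ℝ → ℝ), Measurable φ →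
      (μ[fun ω => φ (m ℓ ω) | G]) =ᵐ[μ] (μ[fun ω => φ (m ⟨0, hM⟩ ω) | G])) :
    (∫ ω, ((1 / (M : ℝ)) * ∑ ℓ, m ℓ ω - T ω) ^ 2 ∂μ
      = (1 / (M : ℝ)) * ∫ ω, (m ⟨0, hM⟩ ω - T ω) ^ 2 ∂μ
        + (1 - 1 / (M : ℝ)) * ∫ ω, ((μ[m ⟨0, hM⟩ | G]) ω - T ω) ^ 2 ∂μ) ∧
    (1 / (M : ℝ)) * ∫ ω, (m ⟨0, hM⟩ ω - T ω) ^ 2 ∂μ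
      ≤ ∫ ω, ((1 / (M : ℝ)) * ∑ ℓ, m ℓ ω - T ω) ^ 2 ∂μ := by
  letI : MeasurableSpace Ω := mΩ
  have hmM : ∀ ℓ, Measurable[mΩ] (m ℓ) := fun ℓ => hmMeas ℓ
  have hM0 : (M:ℝ) ≠ 0 := Nat.cast_ne_zero.mpr (by omega)
  have hM1 : (1:ℝ) ≤ (M:ℝ) := by exact_mod_cast hM
  set c : ℝ := 1 / (M:ℝ) with hc
  set z : Ω → ℝ := m ⟨0, hM⟩ with hz
  set b : Ω → ℝ := μ[z|G] with hb
  have hbL2 : MemLp b 2 μ := my_memℒp_condexp μ G hG (hmL2 _)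
  have F1 : ∀ ℓ, (μ[m ℓ|G]) =ᵐ[μ] b := by
    intro ℓ
    simpa using hIdent ℓ id measurable_id
  set A : ℝ := ∫ ω, z ω * z ω ∂μ with hA
  set B : ℝ := ∫ ω, b ω * b ω ∂μ with hB
  set C : ℝ := ∫ ω, b ω * T ω ∂μ with hC
  have F2 : ∀ ℓ, ∫ ω, m ℓ ω * m ℓ ω ∂μ = A := by
    intro ℓ
    have h1 := hIdent ℓ (fun x => x*x) (measurable_id.mul measurable_id)
    calc ∫ ω, m ℓ ω * m ℓ ω ∂μ
        = ∫ ω, (μ[fun ω => m ℓ ω * m ℓ ω|G]) ω ∂μ := (integral_condExp hG (μ := μ)).symm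
      _ = ∫ ω, (μ[fun ω => z ω * z ω|G]) ω ∂μ := integral_congr_ae h1
      _ = A := integral_condExp hG (μ := μ)
  have F4 : ∀ ℓ, ∫ ω, m ℓ ω * T ω ∂μ = C := by
    intro ℓ
    have hint : Integrable (T * m ℓ) μ := my_int_mul hTL2 (hmL2 ℓ)
    have hpull : μ[T * m ℓ|G] =ᵐ[μ] T * μ[m ℓ|G] :=
      condExp_mul_of_stronglyMeasurable_left hTmeas.stronglyMeasurable hint
        ((hmL2 ℓ).integrable one_le_two)
    calc ∫ ω, m ℓ ω * T ω ∂μ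
        = ∫ ω, (T * m ℓ) ω ∂μ := by
          refine integral_congr_ae (ae_of_all _ fun ω => ?_)
          simp [mul_comm]
      _ = ∫ ω, (μ[T * m ℓ|G]) ω ∂μ := (integral_condExp hG (μ := μ)).symm
      _ = C := by
          refine integral_congr_ae ?_
          filter_upwards [hpull, F1 ℓ] with ω e1 e2
          rw [e1]
          simp only [Pi.mul_apply, e2]
          ring
  have F3 : ∀ ℓ k, ℓ ≠ k → ∫ ω, m ℓ ω * m k ω ∂μ = B := by
    intro ℓ k hne
    rw [my_integral_mul_condexp μ G hG (hmM ℓ) (hmM k) (hmL2 ℓ) (hmL2 k)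
      (hCondIndep.condIndepFun hne)]
    refine integral_congr_ae ?_
    filter_upwards [F1 ℓ, F1 k] with ω e1 e2
    rw [e1, e2]
  have hSL2 : MemLp (fun ω => ∑ ℓ, m ℓ ω) 2 μ :=
    memLp_finsetSum Finset.univ (fun ℓ _ => hmL2 ℓ)
  have hxL2 : MemLp (fun ω => c * ∑ ℓ, m ℓ ω) 2 μ := hSL2.const_mul c
  have hterm : ∀ ℓ k : Fin M, ∫ ω, m ℓ ω * m k ω ∂μ = if ℓ = k then A else B := by
    intro ℓ k
    by_cases h : ℓ = k
    · subst h; simp [F2 ℓ]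
    · simp [h, F3 ℓ k h]
  have hXX : ∫ ω, (c * ∑ ℓ, m ℓ ω) * (c * ∑ ℓ, m ℓ ω) ∂μ
      = c^2 * ((M:ℝ) * A + ((M:ℝ)^2 - (M:ℝ)) * B) := by
    have hint : ∀ ℓ : Fin M, Integrable (fun ω => ∑ k, m ℓ ω * m k ω) μ :=
      fun ℓ => integrable_finset_sum _ (fun k _ => my_int_mul (hmL2 ℓ) (hmL2 k))
    calc ∫ ω, (c * ∑ ℓ, m ℓ ω) * (c * ∑ ℓ, m ℓ ω) ∂μ
        = ∫ ω, c^2 * ∑ ℓ, ∑ k, m ℓ ω * m k ω ∂μ := by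
          refine integral_congr_ae (ae_of_all _ fun ω => ?_)
          show (c * ∑ ℓ, m ℓ ω) * (c * ∑ ℓ, m ℓ ω) = c^2 * ∑ ℓ, ∑ k, m ℓ ω * m k ω
          rw [mul_mul_mul_comm, Finset.sum_mul_sum]
          ring
      _ = c^2 * ∫ ω, ∑ ℓ, ∑ k, m ℓ ω * m k ω ∂μ := integral_const_mul _ _
      _ = c^2 * ∑ ℓ, ∑ k, ∫ ω, m ℓ ω * m k ω ∂μ := by
          rw [integral_finset_sum _ (fun ℓ _ => hint ℓ)]
          congr 1
          exact Finset.sum_congr rfl fun ℓ _ =>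
            integral_finset_sum _ (fun k _ => my_int_mul (hmL2 ℓ) (hmL2 k))
      _ = c^2 * ∑ ℓ : Fin M, (A + ((M:ℝ) - 1) * B) := by
          congr 1
          refine Finset.sum_congr rfl fun ℓ _ => ?_
          have : ∀ k : Fin M, ∫ ω, m ℓ ω * m k ω ∂μ
              = B + (if ℓ = k then A - B else 0) := by
            intro k
            rw [hterm ℓ k]
            split <;> ring
          rw [Finset.sum_congr rfl fun k _ => this k, Finset.sum_add_distrib,
            Finset.sum_ite_eq, Finset.sum_const, Finset.card_univ, Fintype.card_fin,
            nsmul_eq_mul]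
          simp only [Finset.mem_univ, if_true]
          ring
      _ = c^2 * ((M:ℝ) * A + ((M:ℝ)^2 - (M:ℝ)) * B) := by
          rw [Finset.sum_const, Finset.card_univ, Fintype.card_fin, nsmul_eq_mul]
          ring
  have hXT : ∫ ω, (c * ∑ ℓ, m ℓ ω) * T ω ∂μ = c * (M:ℝ) * C := by
    calc ∫ ω, (c * ∑ ℓ, m ℓ ω) * T ω ∂μ
        = ∫ ω, c * ∑ ℓ, (m ℓ ω * T ω) ∂μ := by
          refine integral_congr_ae (ae_of_all _ fun ω => ?_)
          show (c * ∑ ℓ, m ℓ ω) * T ω = c * ∑ ℓ, (m ℓ ω * T ω)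
          rw [mul_assoc, Finset.sum_mul]
      _ = c * ∫ ω, ∑ ℓ, (m ℓ ω * T ω) ∂μ := integral_const_mul _ _
      _ = c * ∑ ℓ, ∫ ω, m ℓ ω * T ω ∂μ := by
          rw [integral_finset_sum _ (fun ℓ _ => my_int_mul (hmL2 ℓ) hTL2)]
      _ = c * (M:ℝ) * C := by
          rw [Finset.sum_congr rfl fun ℓ _ => F4 ℓ, Finset.sum_const, Finset.card_univ,
            Fintype.card_fin, nsmul_eq_mul]
          ring
  have E1 : ∫ ω, (c * ∑ ℓ, m ℓ ω - T ω)^2 ∂μ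
      = c^2 * ((M:ℝ) * A + ((M:ℝ)^2 - (M:ℝ)) * B) - 2 * (c * (M:ℝ) * C)
        + ∫ ω, T ω * T ω ∂μ := by
    rw [my_expand μ hxL2 hTL2, hXX, hXT]
  have E2 : ∫ ω, (z ω - T ω)^2 ∂μ = A - 2 * C + ∫ ω, T ω * T ω ∂μ := by
    rw [my_expand μ (hmL2 _) hTL2, F4 ⟨0, hM⟩]
  have E3 : ∫ ω, (b ω - T ω)^2 ∂μ = B - 2 * C + ∫ ω, T ω * T ω ∂μ := by
    rw [my_expand μ hbL2 hTL2]
  have key : ∫ ω, (c * ∑ ℓ, m ℓ ω - T ω)^2 ∂μ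
      = c * ∫ ω, (z ω - T ω)^2 ∂μ + (1 - c) * ∫ ω, (b ω - T ω)^2 ∂μ := by
    rw [E1, E2, E3, hc]
    field_simp
    ring
  refine ⟨key, ?_⟩
  rw [key]
  have hnn : 0 ≤ ∫ ω, (b ω - T ω)^2 ∂μ := integral_nonneg fun ω => sq_nonneg _
  have hc1 : 0 ≤ 1 - c := by
    rw [hc]
    have : 1 / (M:ℝ) ≤ 1 := by
      rw [div_le_one (by linarith)]
      exact hM1
    linarith
  nlinarith [mul_nonneg hc1 hnn]
end
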